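/- arXiv:2405.01386 — 4 statements merged into one kernel-verified Lean document; each statement's English description precedes it below -/
import Mathlib

section
/- For every ε > 0 there exists a constant C_ε > 0, depending only on ε, such that for every k_F ≥ 1 and every finite set A ⊆ ℤ³ with |A| ≤ |{p ∈ ℤ³ : |p| ≤ 2k_F}|, one has Σ_{p ∈ A} 1/||p|² − ζ| ≤ C_ε k_F^{1+ε}. -/
noncomputable section

/-- Momentum lattice `ℤ³`. -/
abbrev Z3 := Fin 3 → ℤ

/-- `|p|²`, the squared Euclidean norm of a lattice point. -/
def nsq (p : Z3) : ℝ := ∑ i, ((p i : ℝ)) ^ 2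

/-- `|p|`, the Euclidean norm of a lattice point. -/
def nrm (p : Z3) : ℝ := Real.sqrt (nsq p)

/-- The Fermi ball `B_F = {p ∈ ℤ³ : |p| ≤ k_F}`. -/
def FermiBall (kF : ℝ) : Set Z3 := {p | nrm p ≤ kF}

/-- `ζ = ½ ( inf_{p ∉ B_F} |p|² + sup_{q ∈ B_F} |q|² )`. -/
def zeta (kF : ℝ) : ℝ :=
  (sInf (nsq '' (FermiBall kF)ᶜ) + sSup (nsq '' FermiBall kF)) / 2

section KineticAux
open scoped BigOperators

local notation "ℤ[i]" => GaussianInt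


lemma int_abs_le_sq (x : ℤ) : |x| ≤ x^2 := by
  rcases eq_or_ne x 0 with h | h
  · simp [h]
  · have h1 : (1:ℤ) ≤ |x| := Int.one_le_abs (by omega)
    calc |x| = |x| * 1 := by ring
    _ ≤ |x| * |x| := by exact mul_le_mul_of_nonneg_left h1 (abs_nonneg x)
    _ = x^2 := by rw [← abs_mul, ← sq, abs_sq]

lemma gaussian_unit (u : ℤ[i]) (hu : IsUnit u) :
    u = ⟨1,0⟩ ∨ u = ⟨-1,0⟩ ∨ u = ⟨0,1⟩ ∨ u = ⟨0,-1⟩ := by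
  have h := Zsqrtd.norm_eq_one_iff' (by norm_num : (-1:ℤ) ≤ 0) u |>.mpr hu
  have hn : u.re * u.re + u.im * u.im = 1 := by
    simpa [Zsqrtd.norm] using h
  have h1 : u.re ≤ 1 := by nlinarith
  have h2 : -1 ≤ u.re := by nlinarith
  have h3 : u.im ≤ 1 := by nlinarith
  have h4 : -1 ≤ u.im := by nlinarith
  obtain ⟨re, im⟩ := u
  simp only [Zsqrtd.mk.injEq] at *
  interval_cases re <;> interval_cases im <;> omega

def S2 (n : ℕ) : Finset (ℤ × ℤ) :=
  (Finset.Icc (-(n:ℤ)) n ×ˢ Finset.Icc (-(n:ℤ)) n).filter (fun q => q.1^2 + q.2^2 = n)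

lemma mem_S2 {n : ℕ} {q : ℤ × ℤ} : q ∈ S2 n ↔ q.1^2 + q.2^2 = n := by
  constructor
  · intro h; exact (Finset.mem_filter.mp h).2
  · intro h
    refine Finset.mem_filter.mpr ⟨Finset.mem_product.mpr ⟨?_, ?_⟩, h⟩ <;>
      rw [Finset.mem_Icc, ← abs_le] <;>
      [ (have := int_abs_le_sq q.1); (have := int_abs_le_sq q.2)] <;> nlinarith [sq_nonneg q.1, sq_nonneg q.2]


attribute [local instance] UniqueFactorizationMonoid.normalizationMonoid

open UniqueFactorizationMonoid

example : UniqueFactorizationMonoid ℤ[i] := inferInstance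

lemma card4 {α : Type*} [DecidableEq α] (a b c d : α) : ({a,b,c,d} : Finset α).card ≤ 4 := by
  apply le_trans (Finset.card_insert_le _ _)
  apply Nat.succ_le_succ
  apply le_trans (Finset.card_insert_le _ _)
  apply Nat.succ_le_succ
  apply le_trans (Finset.card_insert_le _ _)
  simp

def zmap (q : ℤ × ℤ) : ℤ[i] := ⟨q.1, q.2⟩

lemma zmap_norm (q : ℤ × ℤ) : (zmap q).norm = q.1^2 + q.2^2 := by
  simp [zmap, Zsqrtd.norm]; ring

lemma gnorm_natCast (m : ℕ) : ((m : ℤ[i])).norm = (m:ℤ)^2 := by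
  have : ((m:ℤ) : ℤ[i]) = (m : ℤ[i]) := by push_cast; ring
  rw [← this, Zsqrtd.norm_intCast]; ring

lemma natCast_ne_zero {m : ℕ} (hm : 1 ≤ m) : (m : ℤ[i]) ≠ 0 := by
  intro h
  have := congrArg Zsqrtd.norm h
  rw [gnorm_natCast] at this
  simp at this
  omega

section S2
lemma zmap_ne_zero {m : ℕ} (hm : 1 ≤ m) {q : ℤ × ℤ} (hq : q.1^2 + q.2^2 = (m:ℤ)) :
    zmap q ≠ 0 := by
  intro h
  have := zmap_norm q
  rw [h] at this
  simp [Zsqrtd.norm] at this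
  omega

lemma zmap_dvd {m : ℕ} {q : ℤ × ℤ} (hq : q.1^2 + q.2^2 = (m:ℤ)) :
    zmap q ∣ (m : ℤ[i]) := by
  refine ⟨star (zmap q), ?_⟩
  have h1 := Zsqrtd.norm_eq_mul_conj (zmap q)
  rw [zmap_norm, hq] at h1
  rw [← h1]; push_cast; ring

lemma r2_le_four_mul (m : ℕ) (hm : 1 ≤ m) :
    (S2 m).card ≤
      4 * ((UniqueFactorizationMonoid.normalizedFactors (m : ℤ[i])).powerset.toFinset.card) := by
  classical
  have key : ∀ q ∈ S2 m, q.1^2 + q.2^2 = (m:ℤ) := fun q hq => (Finset.mem_filter.mp hq).2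
  set φ : ℤ × ℤ → Multiset ℤ[i] := fun q => normalizedFactors (zmap q) with hφ
  have hcard : (S2 m).card ≤ 4 * ((S2 m).image φ).card := by
    apply Finset.card_le_mul_card_image
    intro b hb
    rcases Finset.mem_image.mp hb with ⟨q₀, hq₀, rfl⟩
    have hbq₀ : φ q₀ = φ q₀ := rfl
    set z₀ := zmap q₀
    have hsub : Finset.filter (fun x => φ x = φ q₀) (S2 m) ⊆
        {((z₀*⟨1,0⟩).re, (z₀*⟨1,0⟩).im), ((z₀*⟨-1,0⟩).re, (z₀*⟨-1,0⟩).im),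
         ((z₀*⟨0,1⟩).re, (z₀*⟨0,1⟩).im), ((z₀*⟨0,-1⟩).re, (z₀*⟨0,-1⟩).im)} := by
      intro q hq
      rcases Finset.mem_filter.mp hq with ⟨hqS, hqb⟩
      have hqb : φ q = φ q₀ := hqb
      have hassoc : Associated z₀ (zmap q) :=
        (UniqueFactorizationMonoid.associated_iff_normalizedFactors_eq_normalizedFactors
          (zmap_ne_zero hm (key q₀ hq₀)) (zmap_ne_zero hm (key q hqS))).mpr hqb.symm
      rcases hassoc with ⟨u, hu⟩
      have hu4 := gaussian_unit u.val u.isUnit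
      have hq_eq : zmap q = z₀ * u.val := by rw [← hu]
      have hre : q.1 = (z₀ * u.val).re ∧ q.2 = (z₀ * u.val).im := by
        constructor
        · exact congrArg Zsqrtd.re hq_eq
        · exact congrArg Zsqrtd.im hq_eq
      have hqpair : q = ((z₀ * u.val).re, (z₀ * u.val).im) := by
        ext
        · exact hre.1
        · exact hre.2
      rcases hu4 with h | h | h | h <;> rw [h] at hqpair <;> simp [Finset.mem_insert, hqpair]
    calc (Finset.filter (fun x => φ x = φ q₀) (S2 m)).card ≤ _ := Finset.card_le_card hsub
    _ ≤ 4 := card4 _ _ _ _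
  refine hcard.trans (Nat.mul_le_mul_left 4 (Finset.card_le_card ?_))
  intro b hb
  rcases Finset.mem_image.mp hb with ⟨q, hq, rfl⟩
  rw [Multiset.mem_toFinset, Multiset.mem_powerset]
  exact ((UniqueFactorizationMonoid.dvd_iff_normalizedFactors_le_normalizedFactors
    (zmap_ne_zero hm (key q hq)) (natCast_ne_zero hm)).mp (zmap_dvd (key q hq)))
end S2

lemma powerset_toFinset_card_le {α : Type*} [DecidableEq α] (s : Multiset α) :
    s.powerset.toFinset.card ≤ ∏ a ∈ s.toFinset, (s.count a + 1) := by
  classical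
  have hcp : (s.toFinset.pi (fun a => Finset.range (s.count a + 1))).card
      = ∏ a ∈ s.toFinset, (s.count a + 1) := by
    rw [Finset.card_pi]
    exact Finset.prod_congr rfl (fun a _ => Finset.card_range _)
  rw [← hcp]
  apply Finset.card_le_card_of_injOn (fun t => fun a _ => t.count a)
  · intro t ht
    rw [Finset.mem_coe, Multiset.mem_toFinset, Multiset.mem_powerset] at ht
    rw [Finset.mem_coe, Finset.mem_pi]
    intro a _
    rw [Finset.mem_range, Nat.lt_succ_iff]
    exact Multiset.count_le_of_le a ht
  · intro t₁ h₁ t₂ h₂ h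
    simp only [Finset.mem_coe, Multiset.mem_toFinset, Multiset.mem_powerset] at h₁ h₂
    ext a
    by_cases ha : a ∈ s.toFinset
    · exact congrFun (congrFun h a) ha
    · rw [Multiset.mem_toFinset] at ha
      have hs : s.count a = 0 := Multiset.count_eq_zero.mpr ha
      have e1 : t₁.count a = 0 := Nat.le_zero.mp (hs ▸ Multiset.count_le_of_le a h₁)
      have e2 : t₂.count a = 0 := Nat.le_zero.mp (hs ▸ Multiset.count_le_of_le a h₂)
      rw [e1, e2]

/-- norm-natAbs as a monoid hom on Gaussian integers -/
def nnHom : ℤ[i] →* ℕ where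
  toFun z := z.norm.natAbs
  map_one' := by simp [Zsqrtd.norm]
  map_mul' x y := by rw [Zsqrtd.norm_mul, Int.natAbs_mul]

lemma nnHom_natCast (m : ℕ) : nnHom (m : ℤ[i]) = m ^ 2 := by
  simp only [nnHom, MonoidHom.coe_mk, OneHom.coe_mk, gnorm_natCast]
  rw [Int.natAbs_pow]
  simp

lemma nnHom_unit {u : ℤ[i]} (hu : IsUnit u) : nnHom u = 1 := Zsqrtd.norm_eq_one_iff.mpr hu

lemma two_le_nnHom_of_factor {m : ℕ} (hm : 1 ≤ m) {a : ℤ[i]}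
    (ha : a ∈ UniqueFactorizationMonoid.normalizedFactors (m : ℤ[i])) : 2 ≤ nnHom a := by
  have hp := UniqueFactorizationMonoid.prime_of_normalized_factor a ha
  have h0 : nnHom a ≠ 0 := by
    simp only [nnHom, MonoidHom.coe_mk, OneHom.coe_mk, ne_eq, Int.natAbs_eq_zero]
    rw [Zsqrtd.norm_eq_zero_iff (by norm_num : (-1:ℤ) < 0)]
    exact hp.ne_zero
  have h1 : nnHom a ≠ 1 := fun h => hp.not_unit (Zsqrtd.norm_eq_one_iff.mp h)
  omega

lemma prod_nnHom_pow_count {m : ℕ} (hm : 1 ≤ m) :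
    ∏ a ∈ (UniqueFactorizationMonoid.normalizedFactors (m : ℤ[i])).toFinset,
      (nnHom a) ^ ((UniqueFactorizationMonoid.normalizedFactors (m : ℤ[i])).count a) = m ^ 2 := by
  classical
  set F := UniqueFactorizationMonoid.normalizedFactors (m : ℤ[i]) with hF
  obtain ⟨u, hu⟩ := UniqueFactorizationMonoid.prod_normalizedFactors (natCast_ne_zero hm)
  have := congrArg nnHom hu
  rw [map_mul, nnHom_unit u.isUnit, mul_one, nnHom_natCast] at this
  rw [← this, Finset.prod_multiset_count F, map_prod]
  exact Finset.prod_congr rfl (fun a _ => by rw [map_pow])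

lemma card_factors_le {m : ℕ} (hm : 1 ≤ m) :
    2 ^ (Multiset.card (UniqueFactorizationMonoid.normalizedFactors (m : ℤ[i]))) ≤ m ^ 2 := by
  classical
  set F := UniqueFactorizationMonoid.normalizedFactors (m : ℤ[i]) with hF
  obtain ⟨u, hu⟩ := UniqueFactorizationMonoid.prod_normalizedFactors (natCast_ne_zero hm)
  have h2 := congrArg nnHom hu
  rw [map_mul, nnHom_unit u.isUnit, mul_one, nnHom_natCast] at h2
  calc 2 ^ Multiset.card F = 2 ^ Multiset.card (F.map nnHom) := by rw [Multiset.card_map]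
  _ ≤ (F.map nnHom).prod := Multiset.pow_card_le_prod (by
      intro x hx
      rcases Multiset.mem_map.mp hx with ⟨a, ha, rfl⟩
      exact two_le_nnHom_of_factor hm ha)
  _ = nnHom F.prod := (Multiset.prod_hom F nnHom).symm ▸ rfl
  _ = m ^ 2 := h2

lemma small_filter_card (B : ℕ) (s : Finset ℤ[i]) :
    (s.filter (fun a => nnHom a ≤ B)).card ≤ (2*B+1)^2 := by
  classical
  have : ((Finset.Icc (-(B:ℤ)) B ×ˢ Finset.Icc (-(B:ℤ)) B)).card = (2*B+1)^2 := by
    rw [Finset.card_product, Int.card_Icc]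
    have : ((B:ℤ) + 1 - -(B:ℤ)).toNat = 2*B+1 := by omega
    rw [this]; ring
  rw [← this]
  apply Finset.card_le_card_of_injOn (fun a => (a.re, a.im))
  · intro a ha
    rcases Finset.mem_filter.mp ha with ⟨_, hB⟩
    have hnorm : a.norm = a.re^2 + a.im^2 := by simp [Zsqrtd.norm]; ring
    have habs : a.norm.natAbs ≤ B := hB
    have hnn : (0:ℤ) ≤ a.norm := by rw [hnorm]; positivity
    have hle : a.re^2 + a.im^2 ≤ (B:ℤ) := by
      rw [← hnorm]; omega
    have h1 : |a.re| ≤ (B:ℤ) := le_trans (int_abs_le_sq a.re) (by nlinarith [sq_nonneg a.im])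
    have h2 : |a.im| ≤ (B:ℤ) := le_trans (int_abs_le_sq a.im) (by nlinarith [sq_nonneg a.re])
    rw [Finset.mem_coe, Finset.mem_product]
    constructor <;> rw [Finset.mem_Icc, ← abs_le] <;> assumption
  · intro a _ b _ h
    simp only [Prod.mk.injEq] at h
    exact Zsqrtd.ext_iff.mpr h

open Real in
lemma prod_count_bound (ε : ℝ) (hε : 0 < ε) :
    ∃ C > (0:ℝ), ∀ m : ℕ, 1 ≤ m →
      (∏ a ∈ (UniqueFactorizationMonoid.normalizedFactors (m : ℤ[i])).toFinset,
        (((UniqueFactorizationMonoid.normalizedFactors (m : ℤ[i])).count a : ℝ) + 1))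
        ≤ C * (m:ℝ) ^ (3*ε) := by
  classical
  set B : ℕ := ⌈(2:ℝ) ^ (1/ε)⌉₊ with hB
  set K : ℕ := (2*B+1)^2 with hK
  have hKpos : 0 < K := by positivity
  set δ : ℝ := ε / K with hδ
  have hδpos : 0 < δ := by positivity
  set C : ℝ := (4/δ + 1)^K with hC
  have hCpos : 0 < C := by positivity
  refine ⟨C, hCpos, ?_⟩
  intro m hm
  set F := UniqueFactorizationMonoid.normalizedFactors (m : ℤ[i]) with hF
  set c : ℤ[i] → ℕ := fun a => F.count a with hc
  set nn : ℤ[i] → ℕ := fun a => nnHom a with hnn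
  have hm1 : (1:ℝ) ≤ (m:ℝ) := by exact_mod_cast hm
  -- split into small and large
  rw [← Finset.prod_filter_mul_prod_filter_not F.toFinset (fun a => nn a ≤ B)]
  -- large part
  have hlarge : (∏ a ∈ F.toFinset.filter (fun a => ¬ nn a ≤ B), ((c a : ℝ) + 1))
      ≤ (m:ℝ) ^ (2*ε) := by
    have step1 : ∀ a ∈ F.toFinset.filter (fun a => ¬ nn a ≤ B),
        ((c a : ℝ) + 1) ≤ ((nn a : ℝ) ^ (c a : ℕ)) ^ ε := by
      intro a ha
      rcases Finset.mem_filter.mp ha with ⟨_, hBa⟩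
      have h2 : (2:ℝ) ≤ (nn a : ℝ) ^ ε := by
        have hge : ((2:ℝ) ^ (1/ε)) ≤ (nn a : ℝ) := by
          calc ((2:ℝ) ^ (1/ε)) ≤ (B:ℝ) := Nat.le_ceil _
          _ ≤ (nn a : ℝ) := by exact_mod_cast Nat.le_of_lt (Nat.lt_of_not_le hBa)
        calc (2:ℝ) = ((2:ℝ) ^ (1/ε)) ^ ε := by
              rw [← Real.rpow_mul (by norm_num), one_div_mul_cancel hε.ne', Real.rpow_one]
        _ ≤ (nn a : ℝ) ^ ε := Real.rpow_le_rpow (by positivity) hge hε.le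
      calc ((c a : ℝ) + 1) ≤ (2:ℝ) ^ (c a) := by
            exact_mod_cast Nat.lt_two_pow_self (n := c a)
      _ ≤ ((nn a : ℝ) ^ ε) ^ (c a) := pow_le_pow_left₀ (by norm_num) h2 _
      _ = ((nn a : ℝ) ^ (c a : ℕ)) ^ ε := by
            rw [← Real.rpow_natCast ((nn a : ℝ) ^ ε) (c a), ← Real.rpow_natCast (nn a : ℝ) (c a),
              ← Real.rpow_mul (by positivity), ← Real.rpow_mul (by positivity), mul_comm]
    calc (∏ a ∈ F.toFinset.filter (fun a => ¬ nn a ≤ B), ((c a : ℝ) + 1))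
        ≤ ∏ a ∈ F.toFinset.filter (fun a => ¬ nn a ≤ B), ((nn a : ℝ) ^ (c a : ℕ)) ^ ε :=
          Finset.prod_le_prod (fun a _ => by positivity) step1
    _ ≤ ∏ a ∈ F.toFinset, ((nn a : ℝ) ^ (c a : ℕ)) ^ ε := by
          have hone : ∀ a ∈ F.toFinset, (1:ℝ) ≤ ((nn a : ℝ) ^ (c a : ℕ)) ^ ε := by
            intro a ha
            refine Real.one_le_rpow (one_le_pow₀ ?_) hε.le
            exact_mod_cast le_trans (by norm_num) (two_le_nnHom_of_factor hm (Multiset.mem_toFinset.mp ha))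
          rw [← Finset.prod_filter_mul_prod_filter_not F.toFinset (fun a => ¬ nn a ≤ B)
            (fun a => ((nn a : ℝ) ^ (c a : ℕ)) ^ ε)]
          simp only [not_not]
          refine le_mul_of_one_le_right (Finset.prod_nonneg (fun a ha => by positivity)) ?_
          calc (1:ℝ) = ∏ _a ∈ F.toFinset.filter (fun a => nn a ≤ B), (1:ℝ) := by simp
          _ ≤ _ := Finset.prod_le_prod (by intros; norm_num)
              (fun a ha => hone a (Finset.mem_of_mem_filter a ha))
    _ = (∏ a ∈ F.toFinset, ((nn a : ℝ) ^ (c a : ℕ))) ^ ε :=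
          Real.finset_prod_rpow _ _ (fun a _ => by positivity) _
    _ = ((m:ℝ)^2) ^ ε := by
          congr 1
          have := prod_nnHom_pow_count hm
          exact_mod_cast this
    _ = (m:ℝ) ^ (2*ε) := by
          rw [← Real.rpow_natCast (m:ℝ) 2, ← Real.rpow_mul (by positivity)]
          norm_num
  have hmpos : (0:ℝ) < (m:ℝ) := by linarith
  have hsmallcard : (F.toFinset.filter (fun a => nn a ≤ B)).card ≤ K :=
    small_filter_card B F.toFinset
  set Om : ℕ := Multiset.card F with hOm
  have hOmbound : ((Om:ℝ) + 1) ≤ (4/δ + 1) * (m:ℝ) ^ δ := by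
    have h2O : (2:ℝ)^Om ≤ (m:ℝ)^2 := by exact_mod_cast card_factors_le hm
    have hlog : (Om:ℝ) * Real.log 2 ≤ 2 * Real.log m := by
      have := Real.log_le_log (by positivity) h2O
      rwa [Real.log_pow, Real.log_pow] at this
    have hlog2 : (1:ℝ)/2 ≤ Real.log 2 := by
      have := Real.log_two_gt_d9; linarith
    have hOmle : (Om:ℝ) ≤ 4 * Real.log m := by nlinarith [Real.log_nonneg hm1]
    have hlogm : Real.log m ≤ (m:ℝ)^δ / δ := Real.log_le_rpow_div (by positivity) hδpos
    have hm' : (1:ℝ) ≤ (m:ℝ)^δ := Real.one_le_rpow hm1 hδpos.le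
    have h4 : (0:ℝ) < 4/δ := by positivity
    calc ((Om:ℝ)+1) ≤ 4 * ((m:ℝ)^δ/δ) + (m:ℝ)^δ := by nlinarith
    _ = (4/δ + 1) * (m:ℝ)^δ := by field_simp
  have hsmall : (∏ a ∈ F.toFinset.filter (fun a => nn a ≤ B), ((c a:ℝ)+1))
      ≤ C * (m:ℝ)^ε := by
    have h1 : ∀ a ∈ F.toFinset.filter (fun a => nn a ≤ B), ((c a:ℝ)+1) ≤ ((Om:ℝ)+1) := by
      intro a _
      have := Multiset.count_le_card a F
      have : (c a : ℝ) ≤ (Om:ℝ) := by exact_mod_cast this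
      linarith
    calc (∏ a ∈ F.toFinset.filter (fun a => nn a ≤ B), ((c a:ℝ)+1))
        ≤ ∏ _a ∈ F.toFinset.filter (fun a => nn a ≤ B), ((Om:ℝ)+1) :=
          Finset.prod_le_prod (fun a _ => by positivity) h1
    _ = ((Om:ℝ)+1) ^ (F.toFinset.filter (fun a => nn a ≤ B)).card := Finset.prod_const _
    _ ≤ ((Om:ℝ)+1) ^ K := by
          apply pow_le_pow_right₀ (by have := Nat.cast_nonneg (α:=ℝ) Om; linarith) hsmallcard
    _ ≤ ((4/δ+1) * (m:ℝ)^δ)^K := pow_le_pow_left₀ (by positivity) hOmbound K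
    _ = C * ((m:ℝ)^δ)^K := by rw [mul_pow]
    _ = C * (m:ℝ)^ε := by
          rw [← Real.rpow_natCast ((m:ℝ)^δ) K, ← Real.rpow_mul hmpos.le]
          congr 2
          rw [hδ]
          field_simp
  calc (∏ a ∈ F.toFinset.filter (fun a => nn a ≤ B), ((c a:ℝ)+1)) *
        (∏ a ∈ F.toFinset.filter (fun a => ¬ nn a ≤ B), ((c a:ℝ)+1))
      ≤ (C * (m:ℝ)^ε) * ((m:ℝ)^(2*ε)) :=
        mul_le_mul hsmall hlarge (Finset.prod_nonneg (fun a _ => by positivity)) (by positivity)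
  _ = C * (m:ℝ)^(3*ε) := by
        rw [mul_assoc, ← Real.rpow_add hmpos]
        congr 2
        ring

lemma S2_card_bound (ε : ℝ) (hε : 0 < ε) :
    ∃ C > (0:ℝ), ∀ m : ℕ, 1 ≤ m → ((S2 m).card : ℝ) ≤ C * (m:ℝ) ^ ε := by
  classical
  obtain ⟨C₁, hC₁, h⟩ := prod_count_bound (ε/3) (by positivity)
  refine ⟨4*C₁, by positivity, ?_⟩
  intro m hm
  have h1 : ((S2 m).card : ℝ) ≤ 4 *
      (((UniqueFactorizationMonoid.normalizedFactors (m : ℤ[i])).powerset.toFinset.card : ℝ)) := by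
    exact_mod_cast r2_le_four_mul m hm
  have h2 : (((UniqueFactorizationMonoid.normalizedFactors (m : ℤ[i])).powerset.toFinset.card : ℝ))
      ≤ ∏ a ∈ (UniqueFactorizationMonoid.normalizedFactors (m : ℤ[i])).toFinset,
        (((UniqueFactorizationMonoid.normalizedFactors (m : ℤ[i])).count a : ℝ) + 1) := by
    have := powerset_toFinset_card_le (UniqueFactorizationMonoid.normalizedFactors (m : ℤ[i]))
    calc (((UniqueFactorizationMonoid.normalizedFactors (m : ℤ[i])).powerset.toFinset.card : ℝ))
        ≤ ((∏ a ∈ (UniqueFactorizationMonoid.normalizedFactors (m : ℤ[i])).toFinset,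
          ((UniqueFactorizationMonoid.normalizedFactors (m : ℤ[i])).count a + 1) : ℕ) : ℝ) := by
          exact_mod_cast this
    _ = _ := by push_cast; rfl
  have h3 := h m hm
  have : 3 * (ε/3) = ε := by ring
  rw [this] at h3
  have := le_trans h1 (by linarith : 4 * (((UniqueFactorizationMonoid.normalizedFactors
    (m : ℤ[i])).powerset.toFinset.card : ℝ)) ≤ 4 * (C₁ * (m:ℝ)^ε))
  linarith


def nsqZ (p : Z3) : ℤ := ∑ i, (p i)^2

lemma nsq_eq_cast (p : Z3) : nsq p = ((nsqZ p : ℤ) : ℝ) := by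
  rw [nsq, nsqZ]; push_cast; rfl

lemma nsqZ_nonneg (p : Z3) : 0 ≤ nsqZ p := Finset.sum_nonneg (fun i _ => sq_nonneg _)

lemma sq_coord_le_nsqZ (p : Z3) (i : Fin 3) : (p i)^2 ≤ nsqZ p :=
  Finset.single_le_sum (fun j _ => sq_nonneg (p j)) (Finset.mem_univ i)

def S3 (n : ℕ) : Finset Z3 :=
  (Fintype.piFinset fun _ : Fin 3 => Finset.Icc (-(n:ℤ)) n).filter (fun p => nsqZ p = n)

lemma mem_S3 {n : ℕ} {p : Z3} : p ∈ S3 n ↔ nsqZ p = n := by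
  constructor
  · exact fun h => (Finset.mem_filter.mp h).2
  · intro h
    refine Finset.mem_filter.mpr ⟨Fintype.mem_piFinset.mpr (fun i => ?_), h⟩
    rw [Finset.mem_Icc, ← abs_le]
    exact le_trans (int_abs_le_sq (p i)) (h ▸ sq_coord_le_nsqZ p i)

lemma S2_zero_card : (S2 0).card ≤ 1 := by
  refine Finset.card_le_one.mpr (fun a ha b hb => ?_)
  have ha' : a.1^2 + a.2^2 = (0:ℤ) := (Finset.mem_filter.mp ha).2
  have hb' : b.1^2 + b.2^2 = (0:ℤ) := (Finset.mem_filter.mp hb).2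
  have : a.1 = 0 ∧ a.2 = 0 := by constructor <;> nlinarith [sq_nonneg a.1, sq_nonneg a.2]
  have hbz : b.1 = 0 ∧ b.2 = 0 := by constructor <;> nlinarith [sq_nonneg b.1, sq_nonneg b.2]
  ext <;> simp [this.1, this.2, hbz.1, hbz.2]

lemma S3_card_bound (ε : ℝ) (hε : 0 < ε) :
    ∃ C > (0:ℝ), ∀ n : ℕ,
      ((S3 n).card : ℝ) ≤ C * ((n:ℝ)+1) ^ ((1:ℝ)/2 + ε) := by
  classical
  obtain ⟨C₀, hC₀, hr2⟩ := S2_card_bound ε hε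
  set C' : ℝ := max C₀ 1 with hC'
  have hC'pos : (0:ℝ) < C' := lt_of_lt_of_le one_pos (le_max_right _ _)
  refine ⟨3*C', by positivity, ?_⟩
  intro n
  set s : ℕ := Nat.sqrt n with hs
  set T : Finset (ℤ × (ℤ × ℤ)) :=
    (Finset.Icc (-(s:ℤ)) s).biUnion
      (fun a => (S2 ((n - a^2).toNat)).image (fun q => (a, q))) with hT
  -- S3 n injects into T
  have hinj : (S3 n).card ≤ T.card := by
    apply Finset.card_le_card_of_injOn (fun p => (p 0, (p 1, p 2)))
    · intro p hp
      have hpn : nsqZ p = (n:ℤ) := mem_S3.mp hp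
      have hexp : (p 0)^2 + (p 1)^2 + (p 2)^2 = (n:ℤ) := by
        rw [← hpn, nsqZ, Fin.sum_univ_three]
      rw [Finset.mem_coe, Finset.mem_biUnion]
      refine ⟨p 0, ?_, ?_⟩
      · rw [Finset.mem_Icc, ← abs_le]
        have h1 : (p 0)^2 ≤ (n:ℤ) := by nlinarith [sq_nonneg (p 1), sq_nonneg (p 2)]
        have h2 : (p 0).natAbs ≤ s := by
          rw [hs, Nat.le_sqrt]
          have h3 : ((p 0).natAbs : ℤ) * ((p 0).natAbs : ℤ) ≤ (n:ℤ) := by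
            rw [Int.natAbs_mul_self']; nlinarith
          exact_mod_cast h3
        calc |p 0| = ((p 0).natAbs : ℤ) := (Int.abs_eq_natAbs _)
        _ ≤ (s:ℤ) := by exact_mod_cast h2
      · rw [Finset.mem_image]
        refine ⟨(p 1, p 2), ?_, rfl⟩
        rw [mem_S2]
        have hnn : (0:ℤ) ≤ (n:ℤ) - (p 0)^2 := by nlinarith [sq_nonneg (p 1), sq_nonneg (p 2)]
        rw [Int.toNat_of_nonneg hnn]
        change (p 1)^2 + (p 2)^2 = _
        omega
    · intro p hp q hq h
      simp only [Prod.mk.injEq] at h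
      funext i
      fin_cases i <;> simp [h.1, h.2.1, h.2.2]
  -- bound T
  have hfiber : ∀ a : ℤ, (((S2 ((n - a^2).toNat)).card : ℝ)) ≤ C' * ((n:ℝ)+1)^(ε:ℝ) := by
    intro a
    set m : ℕ := (n - a^2).toNat with hm
    have hone : (1:ℝ) ≤ ((n:ℝ)+1)^(ε:ℝ) :=
      Real.one_le_rpow (by have := Nat.cast_nonneg (α:=ℝ) n; linarith) hε.le
    rcases Nat.eq_zero_or_pos m with h0 | hpos
    · rw [h0]
      calc ((S2 0).card : ℝ) ≤ 1 := by exact_mod_cast S2_zero_card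
      _ ≤ C' * ((n:ℝ)+1)^(ε:ℝ) := by nlinarith [le_max_right C₀ (1:ℝ)]
    · have hmn : m ≤ n := by
        have := sq_nonneg a
        omega
      calc ((S2 m).card : ℝ) ≤ C₀ * (m:ℝ)^(ε:ℝ) := hr2 m hpos
      _ ≤ C' * ((n:ℝ)+1)^(ε:ℝ) := by
          apply mul_le_mul (le_max_left _ _)
            (Real.rpow_le_rpow (by positivity) (by exact_mod_cast Nat.le_succ_of_le hmn) hε.le)
            (by positivity) hC'pos.le
  have hTcard : (T.card : ℝ) ≤ (2*(s:ℝ)+1) * (C' * ((n:ℝ)+1)^(ε:ℝ)) := by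
    have h1 : T.card ≤ ∑ a ∈ Finset.Icc (-(s:ℤ)) s, ((S2 ((n - a^2).toNat)).image (fun q => (a, q))).card :=
      Finset.card_biUnion_le
    have h2 : (T.card : ℝ) ≤ ∑ a ∈ Finset.Icc (-(s:ℤ)) s, ((S2 ((n - a^2).toNat)).card : ℝ) := by
      calc (T.card : ℝ) ≤ ((∑ a ∈ Finset.Icc (-(s:ℤ)) s, ((S2 ((n - a^2).toNat)).image (fun q => (a, q))).card : ℕ) : ℝ) := by exact_mod_cast h1
      _ ≤ _ := by
          push_cast
          apply Finset.sum_le_sum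
          intro a _
          exact_mod_cast Finset.card_image_le
    calc (T.card : ℝ) ≤ _ := h2
    _ ≤ ∑ _a ∈ Finset.Icc (-(s:ℤ)) s, C' * ((n:ℝ)+1)^(ε:ℝ) :=
        Finset.sum_le_sum (fun a _ => hfiber a)
    _ = ((Finset.Icc (-(s:ℤ)) s).card : ℝ) * (C' * ((n:ℝ)+1)^(ε:ℝ)) := by
        rw [Finset.sum_const, nsmul_eq_mul]
    _ = (2*(s:ℝ)+1) * (C' * ((n:ℝ)+1)^(ε:ℝ)) := by
        congr 2
        rw [Int.card_Icc]
        have : ((s:ℤ) + 1 - -(s:ℤ)).toNat = 2*s+1 := by omega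
        rw [this]; push_cast; ring
  -- assemble
  have hsqrt : (s:ℝ) ≤ ((n:ℝ)+1) ^ ((1:ℝ)/2) := by
    have h1 : ((s:ℝ))^2 ≤ (n:ℝ)+1 := by
      have h0 : s*s ≤ n := by have := Nat.sqrt_le' n; nlinarith [this]
      have h0' : ((s*s : ℕ):ℝ) ≤ (n:ℝ) := by exact_mod_cast h0
      push_cast at h0'
      nlinarith
    have h2 : (s:ℝ) = ((s:ℝ)^2) ^ ((1:ℝ)/2) := by
      rw [← Real.rpow_natCast (s:ℝ) 2, ← Real.rpow_mul (by positivity)]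
      norm_num
    rw [h2]
    exact Real.rpow_le_rpow (by positivity) h1 (by norm_num)
  have hone2 : (1:ℝ) ≤ ((n:ℝ)+1) ^ ((1:ℝ)/2) :=
    Real.one_le_rpow (by have := Nat.cast_nonneg (α:=ℝ) n; linarith) (by norm_num)
  calc ((S3 n).card : ℝ) ≤ (T.card : ℝ) := by exact_mod_cast hinj
  _ ≤ (2*(s:ℝ)+1) * (C' * ((n:ℝ)+1)^(ε:ℝ)) := hTcard
  _ ≤ (3 * ((n:ℝ)+1) ^ ((1:ℝ)/2)) * (C' * ((n:ℝ)+1)^(ε:ℝ)) := by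
      apply mul_le_mul_of_nonneg_right _ (by positivity)
      linarith
  _ = 3*C' * ((n:ℝ)+1) ^ ((1:ℝ)/2 + ε) := by
      rw [Real.rpow_add (by positivity)]
      ring

lemma harmonic_le_log (M : ℕ) (hM : 1 ≤ M) :
    ∑ k ∈ Finset.range M, (1:ℝ)/(k+1) ≤ 1 + Real.log M := by
  induction M with
  | zero => omega
  | succ M ih =>
    rcases Nat.eq_zero_or_pos M with h0 | hpos
    · subst h0; simp
    · have hstep : (1:ℝ)/(M+1) ≤ Real.log (M+1) - Real.log M := by
        have hM0 : (0:ℝ) < M := by exact_mod_cast hpos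
        have hx : (0:ℝ) < (M:ℝ)/(M+1) := by positivity
        have := Real.log_le_sub_one_of_pos hx
        rw [Real.log_div (by positivity) (by positivity)] at this
        have h1 : (M:ℝ)/((M:ℝ)+1) - 1 = -(1/((M:ℝ)+1)) := by field_simp; ring
        rw [h1] at this
        linarith
      rw [Finset.sum_range_succ]
      have := ih hpos
      push_cast
      linarith

lemma sum_inv_dist (n₀ M : ℕ) (h : n₀ < M) :
    ∑ n ∈ Finset.range M, (1:ℝ)/((((n₀ - n) + (n - n₀) : ℕ):ℝ) + 1)
      ≤ 2 * ∑ j ∈ Finset.range M, (1:ℝ)/((j:ℝ)+1) := by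
  classical
  have hsplit := Finset.sum_filter_add_sum_filter_not (Finset.range M) (fun n => n ≤ n₀)
    (fun n => (1:ℝ)/((((n₀ - n) + (n - n₀) : ℕ):ℝ) + 1))
  rw [← hsplit]
  have hH : ∀ j ∈ Finset.range M, (0:ℝ) ≤ 1/((j:ℝ)+1) := fun j _ => by positivity
  have h1 : ∑ n ∈ (Finset.range M).filter (fun n => n ≤ n₀),
      (1:ℝ)/((((n₀ - n) + (n - n₀) : ℕ):ℝ) + 1) ≤ ∑ j ∈ Finset.range M, (1:ℝ)/((j:ℝ)+1) := by
    have heq : ∀ n ∈ (Finset.range M).filter (fun n => n ≤ n₀),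
        (1:ℝ)/((((n₀ - n) + (n - n₀) : ℕ):ℝ) + 1) = (1:ℝ)/(((n₀ - n : ℕ):ℝ)+1) := by
      intro n hn
      rcases Finset.mem_filter.mp hn with ⟨_, hle⟩
      congr 3
      omega
    rw [Finset.sum_congr rfl heq]
    have himg : ∑ n ∈ (Finset.range M).filter (fun n => n ≤ n₀), (1:ℝ)/(((n₀ - n : ℕ):ℝ)+1)
        = ∑ j ∈ ((Finset.range M).filter (fun n => n ≤ n₀)).image (fun n => n₀ - n),
            (1:ℝ)/((j:ℝ)+1) := by
      rw [Finset.sum_image]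
      intro a ha b hb hab
      rcases Finset.mem_filter.mp ha with ⟨_, ha'⟩
      rcases Finset.mem_filter.mp hb with ⟨_, hb'⟩
      dsimp only at hab
      omega
    rw [himg]
    apply Finset.sum_le_sum_of_subset_of_nonneg _ (fun j hj _ => by positivity)
    intro j hj
    rcases Finset.mem_image.mp hj with ⟨n, hn, rfl⟩
    rw [Finset.mem_range]
    omega
  have h2 : ∑ n ∈ (Finset.range M).filter (fun n => ¬ n ≤ n₀),
      (1:ℝ)/((((n₀ - n) + (n - n₀) : ℕ):ℝ) + 1) ≤ ∑ j ∈ Finset.range M, (1:ℝ)/((j:ℝ)+1) := by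
    have hle : ∀ n ∈ (Finset.range M).filter (fun n => ¬ n ≤ n₀),
        (1:ℝ)/((((n₀ - n) + (n - n₀) : ℕ):ℝ) + 1) ≤ (1:ℝ)/(((n - n₀ - 1: ℕ):ℝ)+1) := by
      intro n hn
      rcases Finset.mem_filter.mp hn with ⟨_, hgt⟩
      apply one_div_le_one_div_of_le (by positivity)
      have e1 : (n₀ - n) + (n - n₀) = n - n₀ := by omega
      rw [e1]
      have e2 : (n - n₀ : ℕ) = (n - n₀ - 1 : ℕ) + 1 := by omega
      rw [e2]
      push_cast
      linarith
    calc _ ≤ ∑ n ∈ (Finset.range M).filter (fun n => ¬ n ≤ n₀), (1:ℝ)/(((n - n₀ - 1: ℕ):ℝ)+1) :=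
        Finset.sum_le_sum hle
    _ = ∑ j ∈ ((Finset.range M).filter (fun n => ¬ n ≤ n₀)).image (fun n => n - n₀ - 1),
          (1:ℝ)/((j:ℝ)+1) := by
        rw [Finset.sum_image]
        intro a ha b hb hab
        rcases Finset.mem_filter.mp ha with ⟨_, ha'⟩
        rcases Finset.mem_filter.mp hb with ⟨_, hb'⟩
        dsimp only at hab
        omega
    _ ≤ _ := by
        apply Finset.sum_le_sum_of_subset_of_nonneg _ (fun j hj _ => by positivity)
        intro j hj
        rcases Finset.mem_image.mp hj with ⟨n, hn, rfl⟩
        rcases Finset.mem_filter.mp hn with ⟨hnM, _⟩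
        rw [Finset.mem_range] at *
        omega
  linarith

lemma inv_dist_le {ζ : ℝ} (hζ : 0 ≤ ζ) (n : ℕ) (hgap : 1/2 ≤ |(n:ℝ) - ζ|) :
    |(n:ℝ) - ζ|⁻¹ ≤ 4 * (1/((((⌊ζ⌋₊ - n) + (n - ⌊ζ⌋₊) : ℕ):ℝ) + 1)) := by
  set n₀ : ℕ := ⌊ζ⌋₊ with hn₀
  set k : ℕ := (n₀ - n) + (n - n₀) with hk
  have hfl : (n₀:ℝ) ≤ ζ := Nat.floor_le hζ
  have hfu : ζ < (n₀:ℝ) + 1 := Nat.lt_floor_add_one ζ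
  have hlow : ((k:ℝ)+1)/4 ≤ |(n:ℝ) - ζ| := by
    rcases le_or_gt n₀ n with hcase | hcase
    · have hkr : (k:ℝ) = (n:ℝ) - (n₀:ℝ) := by
        have : k = n - n₀ := by omega
        rw [this, Nat.cast_sub hcase]
      rcases le_or_gt (k:ℕ) 1 with hk1 | hk1
      · have : (k:ℝ) ≤ 1 := by exact_mod_cast hk1
        linarith
      · have h2k : (2:ℝ) ≤ (k:ℝ) := by exact_mod_cast hk1
        have : (n:ℝ) - ζ ≥ (k:ℝ) - 1 := by linarith
        have habs : (n:ℝ) - ζ ≤ |(n:ℝ) - ζ| := le_abs_self _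
        linarith
    · have hkr : (k:ℝ) = (n₀:ℝ) - (n:ℝ) := by
        have : k = n₀ - n := by omega
        rw [this, Nat.cast_sub hcase.le]
      have h1 : (1:ℝ) ≤ (k:ℝ) := by
        have : 1 ≤ k := by omega
        exact_mod_cast this
      have : ζ - (n:ℝ) ≥ (k:ℝ) := by linarith
      have habs : ζ - (n:ℝ) ≤ |(n:ℝ) - ζ| := by rw [abs_sub_comm]; exact le_abs_self _
      linarith
  have hpos : (0:ℝ) < ((k:ℝ)+1)/4 := by positivity
  calc |(n:ℝ) - ζ|⁻¹ ≤ (((k:ℝ)+1)/4)⁻¹ := by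
        apply inv_anti₀ hpos hlow
  _ = 4 * (1/((k:ℝ)+1)) := by field_simp


lemma nsq_nonneg (p : Z3) : 0 ≤ nsq p := Finset.sum_nonneg (fun i _ => sq_nonneg _)

lemma nrm_le_iff {p : Z3} {r : ℝ} (hr : 0 ≤ r) : nrm p ≤ r ↔ nsq p ≤ r^2 := by
  constructor
  · intro h
    have h2 : nrm p ^ 2 ≤ r ^ 2 := by
      have h0 : 0 ≤ nrm p := Real.sqrt_nonneg _
      nlinarith
    rwa [nrm, Real.sq_sqrt (nsq_nonneg p)] at h2
  · intro h
    rw [nrm, show r = Real.sqrt (r^2) by rw [Real.sqrt_sq hr]]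
    exact Real.sqrt_le_sqrt h

lemma zeta_props (kF : ℝ) (hkF : 1 ≤ kF) :
    0 ≤ zeta kF ∧ zeta kF ≤ 4*kF^2 ∧ ∀ p : Z3, 1/2 ≤ |nsq p - zeta kF| := by
  have hkF0 : (0:ℝ) ≤ kF := by linarith
  set T : Set ℤ := nsqZ '' (FermiBall kF) with hT
  set U : Set ℤ := nsqZ '' (FermiBall kF)ᶜ with hU
  -- T : nonempty, bounded above
  have h0ball : (fun _ => 0 : Z3) ∈ FermiBall kF := by
    show nrm (fun _ => 0) ≤ kF
    rw [nrm_le_iff hkF0]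
    simp [nsq]
    positivity
  have hTne : T.Nonempty := ⟨nsqZ (fun _ => 0), ⟨_, h0ball, rfl⟩⟩
  have hTbdd : ∀ x ∈ T, x ≤ ⌊kF^2⌋ := by
    rintro x ⟨p, hp, rfl⟩
    rw [Int.le_floor, ← nsq_eq_cast]
    exact (nrm_le_iff hkF0).mp hp
  -- U : nonempty, bounded below
  have hUbdd : ∀ x ∈ U, (0:ℤ) ≤ x := by rintro x ⟨p, _, rfl⟩; exact nsqZ_nonneg p
  set w : Z3 := fun i => if i = 0 then (⌊kF⌋+1) else 0 with hw
  have hwnsq : nsqZ w = (⌊kF⌋+1)^2 := by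
    rw [nsqZ, Fin.sum_univ_three, hw]
    simp [show (1:Fin 3) ≠ 0 by decide, show (2:Fin 3) ≠ 0 by decide]
  have hkflr : (0:ℤ) ≤ ⌊kF⌋ := by positivity
  have hwmem : w ∈ (FermiBall kF)ᶜ := by
    intro hmem
    have h1 : nsq w ≤ kF^2 := (nrm_le_iff hkF0).mp hmem
    rw [nsq_eq_cast, hwnsq] at h1
    push_cast at h1
    have h2 : kF < (⌊kF⌋:ℝ) + 1 := Int.lt_floor_add_one kF
    nlinarith [Int.floor_le kF]
  have hUne : U.Nonempty := ⟨nsqZ w, ⟨w, hwmem, rfl⟩⟩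
  set b : ℤ := sSup T with hb
  set a : ℤ := sInf U with ha
  have hbT : b ∈ T := Int.csSup_mem hTne ⟨⌊kF^2⌋, fun x hx => hTbdd x hx⟩
  have haU : a ∈ U := Int.csInf_mem hUne ⟨0, fun x hx => hUbdd x hx⟩
  have hbub : ∀ x ∈ T, x ≤ b := fun x hx => le_csSup ⟨⌊kF^2⌋, fun y hy => hTbdd y hy⟩ hx
  have halb : ∀ x ∈ U, a ≤ x := fun x hx => csInf_le ⟨0, fun y hy => hUbdd y hy⟩ hx
  -- identify the real sSup/sInf
  have hsup : sSup (nsq '' FermiBall kF) = (b:ℝ) := by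
    apply IsGreatest.csSup_eq
    constructor
    · rcases hbT with ⟨p, hp, hpb⟩
      exact ⟨p, hp, by rw [nsq_eq_cast, hpb]⟩
    · rintro x ⟨p, hp, rfl⟩
      rw [nsq_eq_cast]
      exact_mod_cast hbub _ ⟨p, hp, rfl⟩
  have hinf : sInf (nsq '' (FermiBall kF)ᶜ) = (a:ℝ) := by
    apply IsLeast.csInf_eq
    constructor
    · rcases haU with ⟨p, hp, hpa⟩
      exact ⟨p, hp, by rw [nsq_eq_cast, hpa]⟩
    · rintro x ⟨p, hp, rfl⟩
      rw [nsq_eq_cast]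
      exact_mod_cast halb _ ⟨p, hp, rfl⟩
  have hzeta : zeta kF = ((a:ℝ) + (b:ℝ))/2 := by rw [zeta, hinf, hsup]
  -- bounds on a and b
  have hbkF : (b:ℝ) ≤ kF^2 := by
    rcases hbT with ⟨p, hp, hpb⟩
    rw [← hpb, ← nsq_eq_cast]
    exact (nrm_le_iff hkF0).mp hp
  have hb0 : (0:ℤ) ≤ b := by
    rcases hbT with ⟨p, _, hpb⟩; rw [← hpb]; exact nsqZ_nonneg p
  have hakF : kF^2 < (a:ℝ) := by
    rcases haU with ⟨p, hp, hpa⟩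
    rw [← hpa, ← nsq_eq_cast]
    by_contra hle
    push_neg at hle
    exact hp ((nrm_le_iff hkF0).mpr hle)
  have ha4 : (a:ℝ) ≤ 4*kF^2 := by
    have h1 : a ≤ nsqZ w := halb _ ⟨w, hwmem, rfl⟩
    have h2 : ((nsqZ w : ℤ):ℝ) ≤ 4*kF^2 := by
      rw [hwnsq]
      push_cast
      have hf1 : ((⌊kF⌋:ℝ)+1) ≤ 2*kF := by
        have := Int.floor_le kF
        linarith
      have hf2 : (0:ℝ) ≤ (⌊kF⌋:ℝ)+1 := by
        have : (0:ℝ) ≤ (⌊kF⌋:ℝ) := by exact_mod_cast hkflr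
        linarith
      nlinarith
    calc (a:ℝ) ≤ ((nsqZ w : ℤ):ℝ) := by exact_mod_cast h1
    _ ≤ _ := h2
  have hba : b < a := by
    have : (b:ℝ) < (a:ℝ) := lt_of_le_of_lt hbkF hakF
    exact_mod_cast this
  have hgap : ∀ p : Z3, 1/2 ≤ |nsq p - zeta kF| := by
    intro p
    have hab1 : (b:ℝ) + 1 ≤ (a:ℝ) := by exact_mod_cast hba
    by_cases hp : p ∈ FermiBall kF
    · have h1 : nsqZ p ≤ b := hbub _ ⟨p, hp, rfl⟩
      have h2 : nsq p ≤ (b:ℝ) := by rw [nsq_eq_cast]; exact_mod_cast h1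
      rw [hzeta]
      rw [abs_sub_comm, le_abs]
      left
      linarith
    · have h1 : a ≤ nsqZ p := halb _ ⟨p, hp, rfl⟩
      have h2 : (a:ℝ) ≤ nsq p := by rw [nsq_eq_cast]; exact_mod_cast h1
      rw [hzeta, le_abs]
      left
      linarith
  refine ⟨?_, ?_, hgap⟩
  · rw [hzeta]
    have : (0:ℝ) ≤ (b:ℝ) := by exact_mod_cast hb0
    have ha0 : (0:ℝ) ≤ (a:ℝ) := by nlinarith
    linarith
  · rw [hzeta]; nlinarith


end KineticAux

set_option maxHeartbeats 2000000 in
/-- **Kinetic sum estimate.** For every `ε > 0` there is `C_ε > 0` such that for every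
`k_F ≥ 1` and every finite `A ⊆ ℤ³` with `|A| ≤ |{p ∈ ℤ³ : |p| ≤ 2 k_F}|`,
`∑_{p ∈ A} 1/||p|² − ζ| ≤ C_ε k_F^{1+ε}`. -/
theorem kinetic_sum_estimate (ε : ℝ) (hε : 0 < ε) :
    ∃ C > (0 : ℝ), ∀ kF : ℝ, 1 ≤ kF →
      ∀ A : Finset Z3, (A.card : ℕ) ≤ {p : Z3 | nrm p ≤ 2 * kF}.ncard →
        ∑ p ∈ A, |nsq p - zeta kF|⁻¹ ≤ C * kF ^ (1 + ε) := by
  classical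
  set ε' : ℝ := ε/3 with hε'
  have hε'pos : 0 < ε' := by positivity
  obtain ⟨C₃, hC₃, hS3⟩ := S3_card_bound ε' hε'pos
  set Cn : ℝ := C₃ * (7:ℝ) ^ ((1:ℝ)/2 + ε') * 8 * (3 + 2/ε') with hCn
  have hCnpos : 0 < Cn := by positivity
  refine ⟨Cn + 125, by positivity, ?_⟩
  intro kF hkF A hA
  have hkF0 : (0:ℝ) < kF := by linarith
  obtain ⟨hz0, hz4, hgap⟩ := zeta_props kF hkF
  set ζ : ℝ := zeta kF with hζ
  have hkFr : kF ≤ kF ^ (1+ε) := by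
    calc kF = kF ^ (1:ℝ) := (Real.rpow_one kF).symm
    _ ≤ kF ^ (1+ε) := Real.rpow_le_rpow_of_exponent_le hkF (by linarith)
  -- cardinality of A
  have hAcard : (A.card : ℝ) ≤ 125 * kF^3 := by
    set R : ℤ := ⌊2*kF⌋ with hR
    have hR0 : 0 ≤ R := by
      rw [hR]
      have : (0:ℝ) ≤ 2*kF := by linarith
      exact Int.floor_nonneg.mpr this
    set BoxF : Finset Z3 := Fintype.piFinset (fun _ : Fin 3 => Finset.Icc (-R) R) with hBox
    have hsub : {p : Z3 | nrm p ≤ 2 * kF} ⊆ (BoxF : Set Z3) := by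
      intro p hp
      have hnsq : nsq p ≤ (2*kF)^2 := (nrm_le_iff (by linarith)).mp hp
      simp only [hBox, Finset.coe_sort_coe, Finset.mem_coe, Fintype.mem_piFinset]
      intro i
      rw [Finset.mem_Icc]
      have hsq : ((p i : ℝ))^2 ≤ (2*kF)^2 := by
        have h1 : ((p i)^2 : ℤ) ≤ nsqZ p := sq_coord_le_nsqZ p i
        have h2 : (((p i)^2 : ℤ):ℝ) ≤ nsq p := by rw [nsq_eq_cast]; exact_mod_cast h1
        push_cast at h2
        linarith
      have habs : |(p i : ℝ)| ≤ 2*kF := by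
        nlinarith [sq_abs ((p i : ℝ)), abs_nonneg ((p i : ℝ))]
      rw [abs_le] at habs
      constructor
      · rw [neg_le, hR, Int.le_floor]
        push_cast
        linarith [habs.1]
      · rw [hR, Int.le_floor]
        exact habs.2
    have hncard : {p : Z3 | nrm p ≤ 2 * kF}.ncard ≤ BoxF.card := by
      have := Set.ncard_le_ncard hsub (Finset.finite_toSet BoxF)
      rwa [Set.ncard_coe_finset] at this
    have hboxcard : (BoxF.card : ℝ) ≤ (4*kF+1)^3 := by
      have h1 : BoxF.card = ((Finset.Icc (-R) R).card)^3 := by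
        rw [hBox, Fintype.card_piFinset]
        simp [Finset.prod_const]
      have h2 : (Finset.Icc (-R) R).card = (2*R+1).toNat := by
        rw [Int.card_Icc]
        congr 1
        omega
      have h3 : ((2*R+1).toNat : ℝ) ≤ 4*kF+1 := by
        have hRle : (R:ℝ) ≤ 2*kF := Int.floor_le _
        have : ((2*R+1).toNat : ℤ) = 2*R+1 := Int.toNat_of_nonneg (by omega)
        have h4 : ((2*R+1).toNat : ℝ) = 2*(R:ℝ)+1 := by exact_mod_cast this
        rw [h4]; linarith
      rw [h1, h2]
      have hc : ((((2*R+1).toNat)^3 : ℕ) : ℝ) = ((2*R+1).toNat : ℝ)^3 := by push_cast; ring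
      rw [hc]
      apply pow_le_pow_left₀ (by positivity) h3
    calc (A.card : ℝ) ≤ (BoxF.card : ℝ) := by
          exact_mod_cast le_trans hA hncard
    _ ≤ (4*kF+1)^3 := hboxcard
    _ ≤ (5*kF)^3 := by apply pow_le_pow_left₀ (by positivity) (by linarith)
    _ = 125 * kF^3 := by ring
  -- split the sum
  rw [← Finset.sum_filter_add_sum_filter_not A (fun p => |nsq p - ζ| < kF^2)]
  set Anear := A.filter (fun p => |nsq p - ζ| < kF^2) with hAnear
  set Afar := A.filter (fun p => ¬ |nsq p - ζ| < kF^2) with hAfar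
  -- far part
  have hfar : ∑ p ∈ Afar, |nsq p - ζ|⁻¹ ≤ 125 * kF ^ (1+ε) := by
    have hterm : ∀ p ∈ Afar, |nsq p - ζ|⁻¹ ≤ (kF^2)⁻¹ := by
      intro p hp
      rcases Finset.mem_filter.mp hp with ⟨_, hge⟩
      push_neg at hge
      exact inv_anti₀ (by positivity) hge
    calc ∑ p ∈ Afar, |nsq p - ζ|⁻¹ ≤ Afar.card • (kF^2)⁻¹ := Finset.sum_le_card_nsmul _ _ _ hterm
    _ = (Afar.card : ℝ) * (kF^2)⁻¹ := by rw [nsmul_eq_mul]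
    _ ≤ (125 * kF^3) * (kF^2)⁻¹ := by
        apply mul_le_mul_of_nonneg_right _ (by positivity)
        have : (Afar.card : ℝ) ≤ (A.card : ℝ) := by
          exact_mod_cast Finset.card_le_card (Finset.filter_subset _ _)
        linarith
    _ = 125 * kF := by field_simp
    _ ≤ 125 * kF ^ (1+ε) := by linarith
  -- near part
  have hnear : ∑ p ∈ Anear, |nsq p - ζ|⁻¹ ≤ Cn * kF ^ (1+ε) := by
    set M : ℕ := ⌊6*kF^2⌋₊ + 1 with hM
    have hM6 : 6*kF^2 < (M:ℝ) := by
      rw [hM]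
      push_cast
      exact Nat.lt_floor_add_one _
    have hkF2 : (1:ℝ) ≤ kF^2 := by nlinarith
    have hM1 : 1 ≤ M := by omega
    have hMr : (1:ℝ) ≤ (M:ℝ) := by exact_mod_cast hM1
    set n₀ : ℕ := ⌊ζ⌋₊ with hn₀
    have hn₀M : n₀ < M := by
      have h1 : (n₀:ℝ) ≤ ζ := Nat.floor_le hz0
      have h2 : (n₀:ℝ) < (M:ℝ) := by nlinarith
      exact_mod_cast h2
    have hmaps : ∀ p ∈ Anear, (nsqZ p).toNat ∈ Finset.range M := by
      intro p hp
      rcases Finset.mem_filter.mp hp with ⟨_, hlt⟩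
      have h1 : nsq p - ζ ≤ |nsq p - ζ| := le_abs_self _
      have h2 : nsq p < ζ + kF^2 := by linarith
      have h3 : nsq p < (M:ℝ) := by nlinarith
      rw [Finset.mem_range]
      have h4 : (((nsqZ p).toNat : ℤ):ℝ) < (M:ℝ) := by
        rw [Int.toNat_of_nonneg (nsqZ_nonneg p), ← nsq_eq_cast]
        exact h3
      exact_mod_cast h4
    rw [← Finset.sum_fiberwise_of_maps_to hmaps (fun p => |nsq p - ζ|⁻¹)]
    -- per fiber bound
    have hfiber : ∀ n ∈ Finset.range M,
        ∑ p ∈ Anear.filter (fun p => (nsqZ p).toNat = n), |nsq p - ζ|⁻¹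
          ≤ (C₃ * (M:ℝ) ^ ((1:ℝ)/2 + ε')) *
            (4 * (1/((((n₀ - n) + (n - n₀) : ℕ):ℝ) + 1))) := by
      intro n hn
      set fib := Anear.filter (fun p => (nsqZ p).toNat = n) with hfib
      have hnsqp : ∀ p ∈ fib, nsq p = (n:ℝ) := by
        intro p hp
        rcases Finset.mem_filter.mp hp with ⟨_, hpn⟩
        have : nsqZ p = (n:ℤ) := by
          rw [← hpn, Int.toNat_of_nonneg (nsqZ_nonneg p)]
        rw [nsq_eq_cast, this]
        push_cast; rfl
      rcases Finset.eq_empty_or_nonempty fib with hemp | ⟨q, hq⟩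
      · rw [hemp]
        simp only [Finset.sum_empty]
        positivity
      · have hgapn : 1/2 ≤ |(n:ℝ) - ζ| := by
          have := hgap q
          rwa [hnsqp q hq] at this
        have hsum_eq : ∑ p ∈ fib, |nsq p - ζ|⁻¹ = (fib.card : ℝ) * |(n:ℝ) - ζ|⁻¹ := by
          rw [Finset.sum_congr rfl (fun p hp => by rw [hnsqp p hp]), Finset.sum_const,
            nsmul_eq_mul]
        rw [hsum_eq]
        have hcard : (fib.card : ℝ) ≤ C₃ * (M:ℝ) ^ ((1:ℝ)/2 + ε') := by
          have hsubS3 : fib ⊆ S3 n := by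
            intro p hp
            rcases Finset.mem_filter.mp hp with ⟨_, hpn⟩
            rw [mem_S3, ← hpn, Int.toNat_of_nonneg (nsqZ_nonneg p)]
          have h1 : (fib.card : ℝ) ≤ ((S3 n).card : ℝ) := by
            exact_mod_cast Finset.card_le_card hsubS3
          have h2 := hS3 n
          have h3 : ((n:ℝ)+1) ^ ((1:ℝ)/2 + ε') ≤ (M:ℝ) ^ ((1:ℝ)/2 + ε') := by
            apply Real.rpow_le_rpow (by positivity) _ (by positivity)
            have : n + 1 ≤ M := Finset.mem_range.mp hn
            exact_mod_cast this
          calc (fib.card : ℝ) ≤ ((S3 n).card : ℝ) := h1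
          _ ≤ C₃ * ((n:ℝ)+1) ^ ((1:ℝ)/2 + ε') := h2
          _ ≤ C₃ * (M:ℝ) ^ ((1:ℝ)/2 + ε') := by
              apply mul_le_mul_of_nonneg_left h3 hC₃.le
        have hinv := inv_dist_le hz0 n hgapn
        rw [← hn₀] at hinv
        apply mul_le_mul hcard hinv (by positivity) (by positivity)
    calc ∑ n ∈ Finset.range M, ∑ p ∈ Anear.filter (fun p => (nsqZ p).toNat = n), |nsq p - ζ|⁻¹
        ≤ ∑ n ∈ Finset.range M, (C₃ * (M:ℝ) ^ ((1:ℝ)/2 + ε')) *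
            (4 * (1/((((n₀ - n) + (n - n₀) : ℕ):ℝ) + 1))) := Finset.sum_le_sum hfiber
    _ = (C₃ * (M:ℝ) ^ ((1:ℝ)/2 + ε')) * 4 *
          ∑ n ∈ Finset.range M, (1/((((n₀ - n) + (n - n₀) : ℕ):ℝ) + 1)) := by
        rw [Finset.mul_sum]
        apply Finset.sum_congr rfl
        intro n _
        ring
    _ ≤ (C₃ * (M:ℝ) ^ ((1:ℝ)/2 + ε')) * 4 * (2 * ∑ j ∈ Finset.range M, (1:ℝ)/((j:ℝ)+1)) := by
        apply mul_le_mul_of_nonneg_left (sum_inv_dist n₀ M hn₀M) (by positivity)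
    _ ≤ (C₃ * (M:ℝ) ^ ((1:ℝ)/2 + ε')) * 4 * (2 * (1 + Real.log M)) := by
        apply mul_le_mul_of_nonneg_left _ (by positivity)
        have := harmonic_le_log M hM1
        linarith
    _ ≤ Cn * kF ^ (1+ε) := by
        -- bound M ≤ 7 kF^2 and log M
        have hM7 : (M:ℝ) ≤ 7*kF^2 := by
          rw [hM]
          push_cast
          have := Nat.floor_le (by positivity : (0:ℝ) ≤ 6*kF^2)
          linarith
        have hMrp : (M:ℝ) ^ ((1:ℝ)/2 + ε') ≤ (7:ℝ) ^ ((1:ℝ)/2 + ε') * kF ^ (1 + 2*ε') := by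
          calc (M:ℝ) ^ ((1:ℝ)/2 + ε') ≤ (7*kF^2) ^ ((1:ℝ)/2 + ε') :=
              Real.rpow_le_rpow (by positivity) hM7 (by positivity)
          _ = (7:ℝ) ^ ((1:ℝ)/2 + ε') * (kF^2) ^ ((1:ℝ)/2 + ε') :=
              Real.mul_rpow (by norm_num) (by positivity)
          _ = (7:ℝ) ^ ((1:ℝ)/2 + ε') * kF ^ (1 + 2*ε') := by
              congr 1
              rw [← Real.rpow_natCast kF 2, ← Real.rpow_mul hkF0.le]
              congr 1
              push_cast
              ring
        have hlogM : 1 + Real.log M ≤ (3 + 2/ε') * kF ^ (ε':ℝ) := by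
          have hlog7 : Real.log 7 ≤ 2 := by
            have h7 : (7:ℝ) ≤ Real.exp 2 := by
              have he := Real.exp_one_gt_d9
              have : Real.exp 2 = (Real.exp 1)^2 := by
                rw [← Real.exp_nat_mul]; norm_num
              nlinarith
            calc Real.log 7 ≤ Real.log (Real.exp 2) :=
                Real.log_le_log (by norm_num) h7
            _ = 2 := Real.log_exp 2
          have hlogkF : Real.log kF ≤ kF ^ (ε':ℝ) / ε' :=
            Real.log_le_rpow_div hkF0.le hε'pos
          have h1 : Real.log M ≤ Real.log (7*kF^2) := Real.log_le_log (by positivity) hM7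
          have h2 : Real.log (7*kF^2) = Real.log 7 + 2 * Real.log kF := by
            rw [Real.log_mul (by norm_num) (by positivity), Real.log_pow]
            push_cast; ring
          have h3 : (1:ℝ) ≤ kF ^ (ε':ℝ) := Real.one_le_rpow hkF (by positivity)
          have h4 : (0:ℝ) ≤ Real.log kF := Real.log_nonneg hkF
          calc 1 + Real.log M ≤ 1 + Real.log 7 + 2 * Real.log kF := by linarith
          _ ≤ 3 * kF ^ (ε':ℝ) + (2/ε') * kF ^ (ε':ℝ) := by
              have h5 : 2 * Real.log kF ≤ (2/ε') * kF ^ (ε':ℝ) := by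
                have e : (2/ε') * kF ^ (ε':ℝ) = 2 * (kF ^ (ε':ℝ) / ε') := by ring
                rw [e]
                linarith
              linarith
          _ = (3 + 2/ε') * kF ^ (ε':ℝ) := by ring
        have hfin : kF ^ (1 + 2*ε') * kF ^ (ε':ℝ) = kF ^ (1+ε) := by
          rw [← Real.rpow_add hkF0]
          congr 1
          rw [hε']
          ring
        calc (C₃ * (M:ℝ) ^ ((1:ℝ)/2 + ε')) * 4 * (2 * (1 + Real.log M))
            ≤ (C₃ * ((7:ℝ) ^ ((1:ℝ)/2 + ε') * kF ^ (1 + 2*ε'))) * 4 *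
              (2 * ((3 + 2/ε') * kF ^ (ε':ℝ))) := by
              apply mul_le_mul
              · apply mul_le_mul_of_nonneg_right _ (by norm_num)
                exact mul_le_mul_of_nonneg_left hMrp hC₃.le
              · have h0 : (0:ℝ) ≤ 1 + Real.log M := by
                  have : (0:ℝ) ≤ Real.log M := Real.log_nonneg hMr
                  linarith
                linarith [mul_le_mul_of_nonneg_left hlogM (by norm_num : (0:ℝ) ≤ 2)]
              · have : (0:ℝ) ≤ Real.log M := Real.log_nonneg hMr
                positivity
              · positivity
        _ = Cn * (kF ^ (1 + 2*ε') * kF ^ (ε':ℝ)) := by rw [hCn]; ring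
        _ = Cn * kF ^ (1+ε) := by rw [hfin]
  calc ∑ p ∈ Anear, |nsq p - ζ|⁻¹ + ∑ p ∈ Afar, |nsq p - ζ|⁻¹
      ≤ Cn * kF ^ (1+ε) + 125 * kF ^ (1+ε) := add_le_add hnear hfar
  _ = (Cn + 125) * kF ^ (1+ε) := by ring

end
end

section
/- Let V be a finite-dimensional real inner product space, let A : V → V be a positive definite self-adjoint operator, and let w ∈ V. Then (A + P_w)^{1/4} = A^{1/4} + (2√2/π) ∫₀^∞ ( t⁴ / (1 + ⟨w, (A + t⁴·I)^{-1} w⟩) ) · P_{(A + t⁴·I)^{-1} w} dt, where the integral is a Bochner integral of operator-valued functions converging in operator norm. -/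
open MeasureTheory
open scoped RealInnerProductSpace

/-- The rank-one operator `P_w : x ↦ ⟨w, x⟩ w`. -/
noncomputable def rankOne {V : Type*} [NormedAddCommGroup V] [InnerProductSpace ℝ V] (w : V) :
    V →L[ℝ] V :=
  (innerSL ℝ w).smulRight w


set_option maxHeartbeats 1000000
set_option synthInstance.maxHeartbeats 1000000
set_option linter.unusedSectionVars false

open Set Real Filter Topology

lemma quartic_pos (s t : ℝ) (hs2 : s^2 = 2) : 0 < t^2 + s*t + 1 := by
  nlinarith [sq_nonneg (2*t + s)]

lemma integrableOn_one_add_pow_four :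
    IntegrableOn (fun t : ℝ => (1 + t^4)⁻¹) (Ioi 0) := by
  have hcont : Continuous (fun t : ℝ => (1 + t^4)⁻¹) := by
    apply Continuous.inv₀ (by continuity)
    intro t; positivity
  have h1 : IntegrableOn (fun t : ℝ => (1 + t^4)⁻¹) (Ioc 0 1) :=
    hcont.integrableOn_Ioc
  have h2 : IntegrableOn (fun t : ℝ => (1 + t^4)⁻¹) (Ioi 1) := by
    refine (integrableOn_Ioi_rpow_of_lt (show (-4:ℝ) < -1 by norm_num) one_pos).mono'
      hcont.aestronglyMeasurable ?_
    filter_upwards [ae_restrict_mem measurableSet_Ioi] with t ht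
    have ht1 : (1:ℝ) < t := ht
    have h4 : t ^ (-4:ℝ) = (t^4)⁻¹ := by
      rw [show (-4:ℝ) = -((4:ℕ):ℝ) by norm_num, Real.rpow_neg (by linarith),
        Real.rpow_natCast]
    rw [Real.norm_eq_abs, abs_of_nonneg (by positivity)]
    rw [h4]
    apply inv_anti₀ (by positivity) (by nlinarith)
  have := h1.union h2
  rwa [Ioc_union_Ioi_eq_Ioi (zero_le_one)] at this

-- antiderivative of 1/(1+t⁴), with s = √2
noncomputable def quarticF (s t : ℝ) : ℝ :=
  s/8 * Real.log (t^2 + s*t + 1) - s/8 * Real.log (t^2 - s*t + 1)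
    + s/4 * Real.arctan (s*t + 1) + s/4 * Real.arctan (s*t - 1)

lemma quarticF_hasDerivAt (s t : ℝ) (hs2 : s^2 = 2) :
    HasDerivAt (quarticF s) ((1 + t^4)⁻¹) t := by
  have hp : 0 < t^2 + s*t + 1 := by nlinarith [sq_nonneg (2*t + s)]
  have hq : 0 < t^2 - s*t + 1 := by nlinarith [sq_nonneg (2*t - s)]
  have hdp : HasDerivAt (fun t : ℝ => t^2 + s*t + 1) (2*t + s) t := by
    have := ((hasDerivAt_pow 2 t).add (((hasDerivAt_id t).const_mul s).add_const 1))
    convert this using 1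
    · rfl
    · rfl
    · funext x; simp [id]; ring
    · push_cast; ring
  have hdq : HasDerivAt (fun t : ℝ => t^2 - s*t + 1) (2*t - s) t := by
    have := ((hasDerivAt_pow 2 t).sub (((hasDerivAt_id t).const_mul s).sub_const 1))
    convert this using 1
    · rfl
    · rfl
    · funext x; simp [id]; ring
    · push_cast; ring
  have hl1 : HasDerivAt (fun t : ℝ => Real.log (t^2 + s*t + 1)) ((2*t+s)/(t^2+s*t+1)) t :=
    hdp.log hp.ne'
  have hl2 : HasDerivAt (fun t : ℝ => Real.log (t^2 - s*t + 1)) ((2*t-s)/(t^2-s*t+1)) t :=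
    hdq.log hq.ne'
  have ha1 : HasDerivAt (fun t : ℝ => Real.arctan (s*t + 1)) (1/(1+(s*t+1)^2) * s) t := by
    have haff : HasDerivAt (fun t : ℝ => s*t + 1) s t := by
      simpa using ((hasDerivAt_id t).const_mul s).add_const 1
    exact (Real.hasDerivAt_arctan (s*t+1)).comp t haff
  have ha2 : HasDerivAt (fun t : ℝ => Real.arctan (s*t - 1)) (1/(1+(s*t-1)^2) * s) t := by
    have haff : HasDerivAt (fun t : ℝ => s*t - 1) s t := by
      simpa using ((hasDerivAt_id t).const_mul s).sub_const 1
    exact (Real.hasDerivAt_arctan (s*t-1)).comp t haff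
  have hD := (((hl1.const_mul (s/8)).sub (hl2.const_mul (s/8))).add
      (ha1.const_mul (s/4))).add (ha2.const_mul (s/4))
  convert hD using 1
  · rfl
  · rfl
  · rfl
  have h2p : 1 + (s*t+1)^2 = 2*(t^2 + s*t + 1) := by linear_combination t^2 * hs2
  have h2q : 1 + (s*t-1)^2 = 2*(t^2 - s*t + 1) := by linear_combination t^2 * hs2
  have hpq : (t^2 + s*t + 1) * (t^2 - s*t + 1) = 1 + t^4 := by
    linear_combination (-t^2) * hs2
  rw [h2p, h2q]
  rw [eq_comm]
  have hP : t * (t + s) + 1 ≠ 0 := by nlinarith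
  have hQ : t * (t - s) + 1 ≠ 0 := by nlinarith
  field_simp
  ring_nf
  simp only [hs2, show s^3 = 2*s by linear_combination s*hs2,
    show s^4 = 4 by linear_combination (s^2+2)*hs2]
  ring_nf

lemma quarticF_tendsto (s : ℝ) (hs2 : s^2 = 2) (hs : 0 < s) :
    Tendsto (quarticF s) atTop (𝓝 (s * π / 4)) := by
  have hp : ∀ t : ℝ, 0 < t^2 + s*t + 1 := fun t => by nlinarith [sq_nonneg (2*t + s)]
  have hq : ∀ t : ℝ, 0 < t^2 - s*t + 1 := fun t => by nlinarith [sq_nonneg (2*t - s)]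
  have hinv : Tendsto (fun t : ℝ => t⁻¹) atTop (𝓝 0) := tendsto_inv_atTop_zero
  have hnum : Tendsto (fun t : ℝ => 1 + s*t⁻¹ + t⁻¹^2) atTop (𝓝 1) := by
    have h0 := ((tendsto_const_nhds (x := (1:ℝ))).add (hinv.const_mul s)).add (hinv.pow 2)
    rw [show (1 + s*0) + (0:ℝ)^2 = 1 by norm_num] at h0
    exact h0
  have hden : Tendsto (fun t : ℝ => 1 - s*t⁻¹ + t⁻¹^2) atTop (𝓝 1) := by
    have h0 := ((tendsto_const_nhds (x := (1:ℝ))).sub (hinv.const_mul s)).add (hinv.pow 2)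
    rw [show (1 - s*0) + (0:ℝ)^2 = 1 by norm_num] at h0
    exact h0
  have hratio : Tendsto (fun t : ℝ => (t^2 + s*t + 1)/(t^2 - s*t + 1)) atTop (𝓝 1) := by
    have h := hnum.div hden one_ne_zero
    rw [show (1:ℝ)/1 = 1 by norm_num] at h
    refine h.congr' ?_
    filter_upwards [eventually_gt_atTop (0:ℝ)] with t ht
    have ht' : t ≠ 0 := ht.ne'
    have hden_eq : 1 - s*t⁻¹ + t⁻¹^2 = (t^2 - s*t + 1) * t⁻¹^2 := by
      field_simp
    have hden_ne : 1 - s*t⁻¹ + t⁻¹^2 ≠ 0 := by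
      rw [hden_eq]; exact mul_ne_zero (hq t).ne' (by positivity)
    show (1 + s*t⁻¹ + t⁻¹^2)/(1 - s*t⁻¹ + t⁻¹^2) = _
    rw [div_eq_div_iff hden_ne (hq t).ne']
    field_simp
  have hlog : Tendsto (fun t : ℝ =>
      s/8 * Real.log (t^2 + s*t + 1) - s/8 * Real.log (t^2 - s*t + 1)) atTop (𝓝 0) := by
    have h1 : Tendsto (fun t : ℝ => Real.log ((t^2 + s*t + 1)/(t^2 - s*t + 1))) atTop (𝓝 0) := by
      have := (Real.continuousAt_log one_ne_zero).tendsto.comp hratio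
      simpa [Function.comp_def] using this
    have := h1.const_mul (s/8)
    rw [mul_zero] at this
    refine this.congr' ?_
    filter_upwards with t
    rw [Real.log_div (hp t).ne' (hq t).ne']
    ring
  have harctanTop : Tendsto Real.arctan atTop (𝓝 (π/2)) :=
    tendsto_nhds_of_tendsto_nhdsWithin Real.tendsto_arctan_atTop
  have haff1 : Tendsto (fun t : ℝ => s*t + 1) atTop atTop :=
    tendsto_atTop_add_const_right _ 1 (Tendsto.const_mul_atTop hs tendsto_id)
  have haff2 : Tendsto (fun t : ℝ => s*t - 1) atTop atTop :=
    tendsto_atTop_add_const_right _ (-1) (Tendsto.const_mul_atTop hs tendsto_id)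
  have ha1 : Tendsto (fun t : ℝ => s/4 * Real.arctan (s*t+1)) atTop (𝓝 (s/4 * (π/2))) :=
    (harctanTop.comp haff1).const_mul (s/4)
  have ha2 : Tendsto (fun t : ℝ => s/4 * Real.arctan (s*t-1)) atTop (𝓝 (s/4 * (π/2))) := by
    have := (harctanTop.comp haff2).const_mul (s/4)
    refine this.congr' ?_
    filter_upwards with t; rfl
  have := (hlog.add ha1).add ha2
  have heq : (0 : ℝ) + s/4 * (π/2) + s/4 * (π/2) = s * π / 4 := by ring
  rw [heq] at this
  exact this

lemma integral_inv_one_add_pow_four :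
    ∫ t in Ioi (0:ℝ), (1 + t^4)⁻¹ = π / (2 * Real.sqrt 2) := by
  set s := Real.sqrt 2 with hs_def
  have hs2 : s^2 = 2 := Real.sq_sqrt (by norm_num)
  have hs : 0 < s := Real.sqrt_pos.mpr (by norm_num)
  have h := integral_Ioi_of_hasDerivAt_of_tendsto'
    (fun t _ => quarticF_hasDerivAt s t hs2) integrableOn_one_add_pow_four
    (quarticF_tendsto s hs2 hs)
  have h0 : quarticF s 0 = 0 := by
    norm_num [quarticF, Real.arctan_one, Real.arctan_neg]
  rw [h, h0, sub_zero, eq_div_iff (by positivity)]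
  linear_combination (π/2) * hs2

lemma integral_scaled (q : ℝ) (hq : 0 < q) :
    IntegrableOn (fun t : ℝ => q^4 / (q^4 + t^4)) (Ioi 0) ∧
    ∫ t in Ioi (0:ℝ), q^4 / (q^4 + t^4) = q * (π / (2 * Real.sqrt 2)) := by
  have key : ∀ t : ℝ, q^4 / (q^4 + t^4) = (1 + (q⁻¹ * t)^4)⁻¹ := by
    intro t
    have h1 : (1 + (q⁻¹ * t)^4) = (q^4 + t^4)/q^4 := by
      field_simp
    rw [h1, inv_div]
  constructor
  · rw [show (fun t : ℝ => q^4 / (q^4 + t^4)) = fun t => (1 + (q⁻¹ * t)^4)⁻¹ from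
      funext key]
    have := (integrableOn_Ioi_comp_mul_left_iff (fun t : ℝ => (1 + t^4)⁻¹) 0
      (inv_pos.mpr hq)).mpr (by simpa using integrableOn_one_add_pow_four)
    simpa using this
  · calc ∫ t in Ioi (0:ℝ), q^4 / (q^4 + t^4)
        = ∫ t in Ioi (0:ℝ), (fun x : ℝ => (1 + x^4)⁻¹) (q⁻¹ * t) := by
          simp_rw [key]
      _ = q * (π / (2 * Real.sqrt 2)) := by
          rw [integral_comp_mul_left_Ioi (fun x : ℝ => (1 + x^4)⁻¹) 0 (inv_pos.mpr hq)]
          rw [mul_zero, integral_inv_one_add_pow_four]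
          simp [smul_eq_mul, inv_inv]


section OperatorAux

variable {V : Type*} [NormedAddCommGroup V] [InnerProductSpace ℝ V] [FiniteDimensional ℝ V]

lemma rankOne_apply (w x : V) : rankOne w x = ⟪w, x⟫ • w := rfl

lemma rankOne_sym (w x y : V) : ⟪rankOne w x, y⟫ = ⟪x, rankOne w y⟫ := by
  simp [rankOne_apply, real_inner_smul_left, real_inner_smul_right]
  rw [real_inner_comm w x]
  ring

/-- diagonal operator w.r.t. an orthonormal basis -/
noncomputable def diagOp {n : ℕ} (b : OrthonormalBasis (Fin n) ℝ V) (c : Fin n → ℝ) :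
    V →L[ℝ] V :=
  ∑ i, c i • rankOne (b i)

lemma diagOp_apply {n : ℕ} (b : OrthonormalBasis (Fin n) ℝ V) (c : Fin n → ℝ) (x : V) :
    diagOp b c x = ∑ i, (c i * ⟪b i, x⟫) • b i := by
  simp [diagOp, rankOne_apply, ContinuousLinearMap.sum_apply, mul_smul]

lemma diagOp_apply_basis {n : ℕ} (b : OrthonormalBasis (Fin n) ℝ V) (c : Fin n → ℝ)
    (j : Fin n) : diagOp b c (b j) = c j • b j := by
  rw [diagOp_apply]
  rw [Finset.sum_eq_single j]
  · rw [orthonormal_iff_ite.mp b.orthonormal j j]; simp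
  · intro i _ hij
    rw [orthonormal_iff_ite.mp b.orthonormal i j]; simp [hij]
  · simp

lemma clm_ext_basis {n : ℕ} (b : OrthonormalBasis (Fin n) ℝ V) {S T : V →L[ℝ] V}
    (h : ∀ i, S (b i) = T (b i)) : S = T := by
  apply ContinuousLinearMap.coe_injective
  apply b.toBasis.ext
  intro i
  simpa [b.coe_toBasis] using h i

lemma inner_diagOp {n : ℕ} (b : OrthonormalBasis (Fin n) ℝ V) (c : Fin n → ℝ) (x : V)
    (i : Fin n) : ⟪b i, diagOp b c x⟫ = c i * ⟪b i, x⟫ := by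
  rw [diagOp_apply, inner_sum]
  rw [Finset.sum_eq_single i]
  · rw [real_inner_smul_right, orthonormal_iff_ite.mp b.orthonormal i i]; simp
  · intro j _ hij
    rw [real_inner_smul_right, orthonormal_iff_ite.mp b.orthonormal i j]
    simp [Ne.symm hij]
  · simp

lemma diagOp_mul {n : ℕ} (b : OrthonormalBasis (Fin n) ℝ V) (c d : Fin n → ℝ) :
    diagOp b c * diagOp b d = diagOp b (fun i => c i * d i) := by
  apply clm_ext_basis b
  intro j
  rw [ContinuousLinearMap.mul_apply, diagOp_apply_basis, _root_.map_smul, diagOp_apply_basis,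
    diagOp_apply_basis, smul_smul]
  congr 1; ring

lemma diagOp_pow4 {n : ℕ} (b : OrthonormalBasis (Fin n) ℝ V) (c : Fin n → ℝ) :
    (diagOp b c) ^ 4 = diagOp b (fun i => (c i) ^ 4) := by
  have h2 : (diagOp b c) ^ 2 = diagOp b (fun i => (c i) ^ 2) := by
    rw [pow_two, diagOp_mul]; congr 1; funext i; ring
  have h4 : (diagOp b c) ^ 4 = ((diagOp b c) ^ 2) ^ 2 := by
    rw [show (4:ℕ) = 2*2 from rfl, pow_mul]
  rw [h4, h2, pow_two, diagOp_mul]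
  congr 1; funext i; ring

/-- A positive definite operator is a unit in the CLM ring. -/
lemma posdef_isUnit (N : V →L[ℝ] V) (hpos : ∀ x : V, x ≠ 0 → 0 < ⟪x, N x⟫) :
    IsUnit N := by
  have hinj : Function.Injective N.toLinearMap := by
    rw [← LinearMap.ker_eq_bot, LinearMap.ker_eq_bot']
    intro x hx
    by_contra hx0
    have := hpos x hx0
    rw [show N.toLinearMap x = N x from rfl] at hx
    rw [hx] at this
    simp at this
  have hbij : Function.Bijective N.toLinearMap :=
    ⟨hinj, LinearMap.injective_iff_surjective.mp hinj⟩
  let e : V ≃L[ℝ] V := (LinearEquiv.ofBijective N.toLinearMap hbij).toContinuousLinearEquiv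
  have he : ∀ x, e x = N x := fun x => rfl
  refine ⟨⟨N, e.symm.toContinuousLinearMap, ?_, ?_⟩, rfl⟩
  · ext x
    simp only [ContinuousLinearMap.mul_apply, ContinuousLinearMap.one_apply,
      ContinuousLinearEquiv.coe_coe]
    rw [← he, e.apply_symm_apply]
  · ext x
    simp only [ContinuousLinearMap.mul_apply, ContinuousLinearMap.one_apply,
      ContinuousLinearEquiv.coe_coe]
    rw [← he, e.symm_apply_apply]

lemma inverse_mul_cancel_apply {N : V →L[ℝ] V} (h : IsUnit N) (x : V) :
    Ring.inverse N (N x) = x := by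
  have := Ring.inverse_mul_cancel N h
  calc Ring.inverse N (N x) = (Ring.inverse N * N) x := rfl
    _ = x := by rw [this]; rfl

lemma mul_inverse_cancel_apply {N : V →L[ℝ] V} (h : IsUnit N) (x : V) :
    N (Ring.inverse N x) = x := by
  have := Ring.mul_inverse_cancel N h
  calc N (Ring.inverse N x) = (N * Ring.inverse N) x := rfl
    _ = x := by rw [this]; rfl

lemma inverse_sym {N : V →L[ℝ] V} (h : IsUnit N)
    (hsym : ∀ x y : V, ⟪N x, y⟫ = ⟪x, N y⟫) (x y : V) :
    ⟪Ring.inverse N x, y⟫ = ⟪x, Ring.inverse N y⟫ := by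
  conv_lhs => rw [← mul_inverse_cancel_apply h y]
  rw [← hsym, mul_inverse_cancel_apply h]

lemma pow4_inj {a b : ℝ} (ha : 0 ≤ a) (hb : 0 ≤ b) (h : a ^ 4 = b ^ 4) : a = b := by
  rcases lt_trichotomy a b with hlt | heq | hgt
  · exfalso; have := pow_lt_pow_left₀ hlt ha (by norm_num : (4:ℕ) ≠ 0); rw [h] at this; exact lt_irrefl _ this
  · exact heq
  · exfalso; have := pow_lt_pow_left₀ hgt hb (by norm_num : (4:ℕ) ≠ 0); rw [h] at this; exact lt_irrefl _ this

/-- uniqueness of the positive semidefinite fourth root -/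
lemma fourth_root_unique {n : ℕ} (b : OrthonormalBasis (Fin n) ℝ V) (q : Fin n → ℝ)
    (hq : ∀ i, 0 ≤ q i) (S : V →L[ℝ] V)
    (hS_sym : ∀ x y : V, ⟪S x, y⟫ = ⟪x, S y⟫) (hS_pos : ∀ x : V, 0 ≤ ⟪x, S x⟫)
    (h4 : S ^ 4 = diagOp b (fun i => (q i) ^ 4)) : S = diagOp b q := by
  have hS : S.toLinearMap.IsSymmetric := fun x y => hS_sym x y
  have hn : Module.finrank ℝ V = n := by
    rw [Module.finrank_eq_card_basis b.toBasis, Fintype.card_fin]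
  set d := hS.eigenvectorBasis hn with hd
  set sv := hS.eigenvalues hn with hsv
  have hSd : ∀ j, S (d j) = sv j • d j := fun j => hS.apply_eigenvectorBasis hn j
  have hdnorm : ∀ j, ⟪d j, d j⟫ = 1 := by
    intro j
    rw [orthonormal_iff_ite.mp d.orthonormal j j]; simp
  have hsv_nonneg : ∀ j, 0 ≤ sv j := by
    intro j
    have := hS_pos (d j)
    rw [hSd j, real_inner_smul_right, hdnorm j, mul_one] at this
    exact this
  have hS4d : ∀ j, (S ^ 4) (d j) = (sv j) ^ 4 • d j := by
    intro j
    have key : ∀ k : ℕ, (S ^ k) (d j) = (sv j) ^ k • d j := by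
      intro k
      induction k with
      | zero => simp
      | succ k ih =>
        rw [pow_succ, ContinuousLinearMap.mul_apply, hSd j, _root_.map_smul, ih, smul_smul,
          pow_succ]
        congr 1; ring
    exact key 4
  -- coefficients match
  have hcoef : ∀ j i, q i * ⟪b i, d j⟫ = sv j * ⟪b i, d j⟫ := by
    intro j i
    have h1 : ⟪b i, (S ^ 4) (d j)⟫ = (sv j) ^ 4 * ⟪b i, d j⟫ := by
      rw [hS4d j, real_inner_smul_right]
    rw [h4, inner_diagOp] at h1
    by_cases hz : ⟪b i, d j⟫ = 0
    · rw [hz, mul_zero, mul_zero]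
    · have : (q i) ^ 4 = (sv j) ^ 4 := by
        exact mul_right_cancel₀ hz h1
      rw [pow4_inj (hq i) (hsv_nonneg j) this]
  apply clm_ext_basis d
  intro j
  rw [hSd j, diagOp_apply]
  have : ∀ i ∈ Finset.univ, (q i * ⟪b i, d j⟫) • b i = (sv j * ⟪b i, d j⟫) • b i := by
    intro i _
    rw [hcoef j i]
  rw [Finset.sum_congr rfl this]
  simp_rw [mul_smul, ← Finset.smul_sum]
  congr 1
  have := b.sum_repr' (d j)
  simpa using this.symm

lemma quarter_root_integral_rep (M S : V →L[ℝ] V)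
    (hM_sym : ∀ x y : V, ⟪M x, y⟫ = ⟪x, M y⟫)
    (hM_pos : ∀ x : V, x ≠ 0 → 0 < ⟪x, M x⟫)
    (hS_sym : ∀ x y : V, ⟪S x, y⟫ = ⟪x, S y⟫) (hS_pos : ∀ x : V, 0 ≤ ⟪x, S x⟫)
    (hS4 : S ^ 4 = M) :
    IntegrableOn (fun t : ℝ => M * Ring.inverse (M + t^4 • (1 : V →L[ℝ] V))) (Ioi 0) ∧
    S = (2 * Real.sqrt 2 / Real.pi) •
      ∫ t in Ioi (0:ℝ), M * Ring.inverse (M + t^4 • (1 : V →L[ℝ] V)) := by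
  have hM : M.toLinearMap.IsSymmetric := fun x y => hM_sym x y
  set n := Module.finrank ℝ V with hn_def
  set b := hM.eigenvectorBasis rfl with hb_def
  set μ := hM.eigenvalues (rfl : Module.finrank ℝ V = n) with hμ_def
  have hMb : ∀ i, M (b i) = μ i • b i := fun i => hM.apply_eigenvectorBasis rfl i
  have hbnorm : ∀ i, ⟪b i, b i⟫ = 1 := by
    intro i
    rw [orthonormal_iff_ite.mp b.orthonormal i i]; simp
  have hμpos : ∀ i, 0 < μ i := by
    intro i
    have hne : b i ≠ 0 := b.orthonormal.ne_zero i
    have := hM_pos (b i) hne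
    rwa [hMb i, real_inner_smul_right, hbnorm i, mul_one] at this
  set q : Fin n → ℝ := fun i => (μ i) ^ ((1:ℝ)/4) with hq_def
  have hqpos : ∀ i, 0 < q i := fun i => Real.rpow_pos_of_pos (hμpos i) _
  have hq4 : ∀ i, (q i)^4 = μ i := by
    intro i
    rw [hq_def]
    rw [← Real.rpow_natCast ((μ i) ^ ((1:ℝ)/4)) 4, ← Real.rpow_mul (hμpos i).le]
    norm_num
  set N : ℝ → V →L[ℝ] V := fun t => M + t^4 • (1 : V →L[ℝ] V) with hN_def
  have hN_apply : ∀ t x, N t x = M x + t^4 • x := by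
    intro t x
    simp [hN_def, ContinuousLinearMap.add_apply, ContinuousLinearMap.smul_apply,
      ContinuousLinearMap.one_apply]
  have hN_pos : ∀ t (x : V), x ≠ 0 → 0 < ⟪x, N t x⟫ := by
    intro t x hx
    rw [hN_apply, inner_add_right, real_inner_smul_right]
    have h1 := hM_pos x hx
    have h2 : 0 ≤ t^4 * ⟪x, x⟫ := by
      apply mul_nonneg (by positivity) real_inner_self_nonneg
    linarith
  have hNunit : ∀ t, IsUnit (N t) := fun t => posdef_isUnit (N t) (hN_pos t)
  have hμt_pos : ∀ t (j : Fin n), 0 < μ j + t^4 := by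
    intro t j
    have := hμpos j
    positivity
  have hNinvb : ∀ t (j : Fin n), Ring.inverse (N t) (b j) = (μ j + t^4)⁻¹ • b j := by
    intro t j
    have h1 : N t ((μ j + t^4)⁻¹ • b j) = b j := by
      rw [_root_.map_smul, hN_apply, hMb j, smul_add, smul_smul, smul_smul]
      rw [← add_smul, ← mul_add, inv_mul_cancel₀ (hμt_pos t j).ne']
      simp
    calc Ring.inverse (N t) (b j)
        = Ring.inverse (N t) (N t ((μ j + t^4)⁻¹ • b j)) := by rw [h1]
      _ = (μ j + t^4)⁻¹ • b j := inverse_mul_cancel_apply (hNunit t) _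
  have hdiag : ∀ t : ℝ, M * Ring.inverse (N t)
      = diagOp b (fun i => (q i)^4 / ((q i)^4 + t^4)) := by
    intro t
    apply clm_ext_basis b
    intro j
    rw [ContinuousLinearMap.mul_apply, hNinvb t j, _root_.map_smul, hMb j,
      diagOp_apply_basis, smul_smul, hq4 j]
    congr 1
    rw [div_eq_mul_inv, mul_comm]
  have funeq : (fun t : ℝ => M * Ring.inverse (N t))
      = fun t : ℝ => ∑ i, ((q i)^4 / ((q i)^4 + t^4)) • rankOne (b i) := by
    funext t
    rw [hdiag t]
    rfl
  have hint : IntegrableOn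
      (fun t : ℝ => M * Ring.inverse (N t)) (Ioi 0) := by
    rw [funeq]
    unfold IntegrableOn
    have hsum := integrable_finset_sum (μ := volume.restrict (Ioi (0:ℝ))) Finset.univ
      (f := fun i (t : ℝ) => ((q i)^4 / ((q i)^4 + t^4)) • rankOne (b i)) ?_
    · exact hsum
    intro i _
    exact ((integral_scaled (q i) (hqpos i)).1).smul_const (rankOne (b i))
  have hval : ∫ t in Ioi (0:ℝ), M * Ring.inverse (N t)
      = ∑ i, (q i * (Real.pi / (2 * Real.sqrt 2))) • rankOne (b i) := by
    rw [funeq, integral_finset_sum _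
      (fun i _ => ((integral_scaled (q i) (hqpos i)).1).smul_const (rankOne (b i)))]
    congr 1
    funext i
    rw [integral_smul_const, (integral_scaled (q i) (hqpos i)).2]
  have hSq : S = diagOp b q := by
    apply fourth_root_unique b q (fun i => (hqpos i).le) S hS_sym hS_pos
    rw [hS4]
    apply clm_ext_basis b
    intro j
    rw [hMb j, diagOp_apply_basis, hq4 j]
  refine ⟨hint, ?_⟩
  rw [hval, hSq, Finset.smul_sum]
  apply Finset.sum_congr rfl
  intro i _
  rw [smul_smul]
  congr 1
  have hpi : Real.pi ≠ 0 := Real.pi_ne_zero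
  have hs : Real.sqrt 2 ≠ 0 := by positivity
  field_simp


end OperatorAux

/-- **Quarter power of a rank-one perturbation.** Let `A` be a positive definite self-adjoint
operator on a finite-dimensional real inner product space and `w ∈ V`. Writing `B = (A + P_w)^{1/4}`
and `R = A^{1/4}` (characterized as the unique positive semidefinite symmetric fourth roots), one
has `B = R + (2√2/π) ∫₀^∞ (t⁴/(1 + ⟨w, (A + t⁴)⁻¹ w⟩)) P_{(A + t⁴)⁻¹ w} dt`, the integral being a
Bochner integral of operator-valued functions. -/
theorem quarter_power_rank_one_perturbation
    {V : Type*} [NormedAddCommGroup V] [InnerProductSpace ℝ V] [FiniteDimensional ℝ V]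
    (A : V →L[ℝ] V) (hA_sym : ∀ x y : V, ⟪A x, y⟫ = ⟪x, A y⟫)
    (hA_pos : ∀ x : V, x ≠ 0 → 0 < ⟪x, A x⟫) (w : V)
    (B : V →L[ℝ] V) (hB_sym : ∀ x y : V, ⟪B x, y⟫ = ⟪x, B y⟫)
    (hB_pos : ∀ x : V, 0 ≤ ⟪x, B x⟫) (hB4 : B ^ 4 = A + rankOne w)
    (R : V →L[ℝ] V) (hR_sym : ∀ x y : V, ⟪R x, y⟫ = ⟪x, R y⟫)
    (hR_pos : ∀ x : V, 0 ≤ ⟪x, R x⟫) (hR4 : R ^ 4 = A) :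
    IntegrableOn
      (fun t : ℝ =>
        (t ^ 4 / (1 + ⟪w, (Ring.inverse (A + t ^ 4 • (1 : V →L[ℝ] V))) w⟫)) •
          rankOne ((Ring.inverse (A + t ^ 4 • (1 : V →L[ℝ] V))) w))
      (Set.Ioi 0) ∧
    B = R + (2 * Real.sqrt 2 / Real.pi) •
      ∫ t in Set.Ioi (0 : ℝ),
        (t ^ 4 / (1 + ⟪w, (Ring.inverse (A + t ^ 4 • (1 : V →L[ℝ] V))) w⟫)) •
          rankOne ((Ring.inverse (A + t ^ 4 • (1 : V →L[ℝ] V))) w) := by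
  
  have hA'_sym : ∀ x y : V, ⟪(A + rankOne w) x, y⟫ = ⟪x, (A + rankOne w) y⟫ := by
    intro x y
    simp only [ContinuousLinearMap.add_apply, inner_add_left, inner_add_right]
    rw [hA_sym, rankOne_sym]
  have hA'_pos : ∀ x : V, x ≠ 0 → 0 < ⟪x, (A + rankOne w) x⟫ := by
    intro x hx
    rw [ContinuousLinearMap.add_apply, inner_add_right, rankOne_apply,
      real_inner_smul_right]
    have h1 := hA_pos x hx
    have h2 : ⟪w, x⟫ * ⟪x, w⟫ = ⟪w, x⟫^2 := by rw [real_inner_comm x w]; ring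
    nlinarith [sq_nonneg (⟪w, x⟫ : ℝ)]
  obtain ⟨hint1, hrep1⟩ := quarter_root_integral_rep (A + rankOne w) B hA'_sym hA'_pos
    hB_sym hB_pos hB4
  obtain ⟨hint2, hrep2⟩ := quarter_root_integral_rep A R hA_sym hA_pos hR_sym hR_pos hR4
  -- Sherman-Morrison : the integrand is the difference of the two resolvent expressions
  have hgdiff : ∀ t : ℝ,
      (t ^ 4 / (1 + ⟪w, (Ring.inverse (A + t ^ 4 • (1 : V →L[ℝ] V))) w⟫)) •
          rankOne ((Ring.inverse (A + t ^ 4 • (1 : V →L[ℝ] V))) w)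
      = (A + rankOne w) * Ring.inverse (A + rankOne w + t^4 • (1 : V →L[ℝ] V))
        - A * Ring.inverse (A + t^4 • (1 : V →L[ℝ] V)) := by
    intro t
    set N : V →L[ℝ] V := A + t^4 • (1 : V →L[ℝ] V) with hN_def
    have hN_apply : ∀ x, N x = A x + t^4 • x := by
      intro x
      simp [hN_def, ContinuousLinearMap.add_apply, ContinuousLinearMap.smul_apply,
        ContinuousLinearMap.one_apply]
    have hN_sym : ∀ x y : V, ⟪N x, y⟫ = ⟪x, N y⟫ := by
      intro x y
      rw [hN_apply, hN_apply, inner_add_left, inner_add_right, real_inner_smul_left,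
        real_inner_smul_right, hA_sym]
    have hN_pos : ∀ x : V, x ≠ 0 → 0 < ⟪x, N x⟫ := by
      intro x hx
      rw [hN_apply, inner_add_right, real_inner_smul_right]
      have h1 := hA_pos x hx
      have h2 : 0 ≤ t^4 * ⟪x, x⟫ := mul_nonneg (by positivity) real_inner_self_nonneg
      linarith
    have hNu : IsUnit N := posdef_isUnit N hN_pos
    set v : V := Ring.inverse N w with hv_def
    have hNv : N v = w := mul_inverse_cancel_apply hNu w
    have hwNinv : ∀ x : V, ⟪w, Ring.inverse N x⟫ = ⟪v, x⟫ := by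
      intro x
      rw [← inverse_sym hNu hN_sym w x]
    set s : ℝ := 1 + ⟪w, v⟫ with hs_def
    have hwv_nonneg : 0 ≤ (⟪w, v⟫ : ℝ) := by
      rw [← hNv, hN_sym]
      by_cases hv0 : v = 0
      · simp [hv0]
      · exact (hN_pos v hv0).le
    have hs_pos : 0 < s := by rw [hs_def]; linarith
    set N' : V →L[ℝ] V := A + rankOne w + t^4 • (1 : V →L[ℝ] V) with hN'_def
    have hN'_eq : N' = N + rankOne w := by rw [hN'_def, hN_def, add_right_comm]
    have hN'_pos : ∀ x : V, x ≠ 0 → 0 < ⟪x, N' x⟫ := by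
      intro x hx
      rw [hN'_eq, ContinuousLinearMap.add_apply, inner_add_right, rankOne_apply,
        real_inner_smul_right]
      have h1 := hN_pos x hx
      have h2 : ⟪w, x⟫ * ⟪x, w⟫ = ⟪w, x⟫^2 := by rw [real_inner_comm x w]; ring
      nlinarith [sq_nonneg (⟪w, x⟫ : ℝ)]
    have hN'u : IsUnit N' := posdef_isUnit N' hN'_pos
    set X : V →L[ℝ] V := Ring.inverse N - s⁻¹ • rankOne v with hX_def
    have hX : N' * X = 1 := by
      apply ContinuousLinearMap.ext
      intro x
      rw [ContinuousLinearMap.mul_apply, ContinuousLinearMap.one_apply]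
      have hXx : X x = Ring.inverse N x - (s⁻¹ * ⟪v, x⟫) • v := by
        rw [hX_def, ContinuousLinearMap.sub_apply, ContinuousLinearMap.smul_apply,
          rankOne_apply, smul_smul]
      have e1 : N (X x) = x - (s⁻¹ * ⟪v, x⟫) • w := by
        rw [hXx, map_sub, _root_.map_smul, hNv, mul_inverse_cancel_apply hNu]
      have e2 : rankOne w (X x) = (s⁻¹ * ⟪v, x⟫) • w := by
        rw [hXx, map_sub, _root_.map_smul, rankOne_apply, rankOne_apply, hwNinv]
        have hc : ⟪v, x⟫ - s⁻¹ * ⟪v, x⟫ * ⟪w, v⟫ = s⁻¹ * ⟪v, x⟫ := by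
          field_simp
          linear_combination (⟪v, x⟫ : ℝ) * hs_def.symm
        rw [smul_smul, ← sub_smul, mul_assoc]
        rw [show ⟪v, x⟫ - s⁻¹ * (⟪v, x⟫ * ⟪w, v⟫) = s⁻¹ * ⟪v, x⟫ by
          linear_combination hc]
      rw [hN'_eq, ContinuousLinearMap.add_apply, e1, e2, sub_add_cancel]
    have hXinv : Ring.inverse N' = X := by
      have h1 : Ring.inverse N' * (N' * X) = Ring.inverse N' := by rw [hX, mul_one]
      rw [← mul_assoc, Ring.inverse_mul_cancel N' hN'u, one_mul] at h1
      exact h1.symm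
    have key : ∀ (M D : V →L[ℝ] V), D = M + t^4 • (1 : V →L[ℝ] V) → IsUnit D →
        M * Ring.inverse D = 1 - t^4 • Ring.inverse D := by
      intro M D hD hMu
      have hM_eq : M = D - t^4 • (1 : V →L[ℝ] V) := by
        rw [hD, add_sub_cancel_right]
      conv_lhs => rw [hM_eq]
      rw [sub_mul, Ring.mul_inverse_cancel _ hMu, smul_mul_assoc, one_mul]
    rw [key (A + rankOne w) N' hN'_def hN'u, key A N hN_def hNu]
    rw [hXinv, hX_def, smul_sub]
    rw [show (t^4/s) • rankOne v = t^4 • (s⁻¹ • rankOne v) by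
      rw [smul_smul, div_eq_mul_inv]]
    abel
  have hfun_eq : (fun t : ℝ =>
      (t ^ 4 / (1 + ⟪w, (Ring.inverse (A + t ^ 4 • (1 : V →L[ℝ] V))) w⟫)) •
        rankOne ((Ring.inverse (A + t ^ 4 • (1 : V →L[ℝ] V))) w))
      = fun t : ℝ => (A + rankOne w) * Ring.inverse (A + rankOne w + t^4 • (1 : V →L[ℝ] V))
        - A * Ring.inverse (A + t^4 • (1 : V →L[ℝ] V)) := funext hgdiff
  constructor
  · rw [hfun_eq]
    exact hint1.sub hint2
  · rw [hfun_eq]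
    rw [integral_sub hint1 hint2, hrep1, hrep2, smul_sub]
    abel
end

section
/- In the one-body setup, with S = ½(h^{-1/2}E^{1/2} − h^{1/2}E^{-1/2}), for all indices 1 ≤ i, j ≤ n one has |⟨x_i, S x_j⟩ − ⟨x_i, v⟩⟨v, x_j⟩/(λ_i + λ_j)| ≤ 2⟨v, h^{-1} v⟩ · ⟨x_i, v⟩⟨v, x_j⟩/(λ_i + λ_j). -/
open scoped RealInnerProductSpace

section Aux
variable {V : Type*} [NormedAddCommGroup V] [InnerProductSpace ℝ V] [FiniteDimensional ℝ V]

/-- If `g` is symmetric psd and `g (g x) = μ² • x` with `μ > 0`, then `g x = μ • x`. -/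
lemma sqrt_eig' {g : V →L[ℝ] V} (gsym : ∀ x y : V, ⟪g x, y⟫ = ⟪x, g y⟫)
    (gpos : ∀ x : V, 0 ≤ ⟪x, g x⟫) {x : V} {μ : ℝ} (hμ : 0 < μ)
    (hx : g (g x) = (μ ^ 2) • x) : g x = μ • x := by
  set z := g x - μ • x with hzdef
  have hgz : g z = -(μ • z) := by
    rw [hzdef, map_sub, map_smul, hx]
    module
  have h1 : (0 : ℝ) ≤ ⟪z, g z⟫ := gpos z
  rw [hgz, inner_neg_right, real_inner_smul_right] at h1
  have h2 : (0:ℝ) ≤ ⟪z, z⟫ := real_inner_self_nonneg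
  have h3 : ⟪z, z⟫ = 0 := by nlinarith
  have h4 : g x - μ • x = 0 := by rw [← hzdef]; rwa [inner_self_eq_zero] at h3
  exact sub_eq_zero.mp h4

lemma isUnit_of_inj {f : V →L[ℝ] V} (hf : Function.Injective f) : IsUnit f := by
  have hbij : Function.Bijective (f : V →ₗ[ℝ] V) :=
    ⟨hf, LinearMap.injective_iff_surjective.mp hf⟩
  let e := LinearEquiv.ofBijective (f : V →ₗ[ℝ] V) hbij
  let g : V →L[ℝ] V := LinearMap.toContinuousLinearMap (e.symm : V →ₗ[ℝ] V)
  refine isUnit_iff_exists.mpr ⟨g, ?_, ?_⟩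
  · ext x
    have : f (e.symm x) = e (e.symm x) := rfl
    simpa [g, ContinuousLinearMap.mul_apply, this] using e.apply_symm_apply x
  · ext x
    have : e.symm (f x) = e.symm (e x) := rfl
    simpa [g, ContinuousLinearMap.mul_apply, this] using e.symm_apply_apply x

lemma ringInverse_apply_eig {f : V →L[ℝ] V} (hf : IsUnit f) {x : V} {c : ℝ} (hc : c ≠ 0)
    (hx : f x = c • x) : Ring.inverse f x = c⁻¹ • x := by
  have h1 : Ring.inverse f * f = 1 := Ring.inverse_mul_cancel _ hf
  have h2 : f (c⁻¹ • x) = x := by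
    rw [map_smul, hx, smul_smul, inv_mul_cancel₀ hc, one_smul]
  calc Ring.inverse f x = Ring.inverse f (f (c⁻¹ • x)) := by rw [h2]
    _ = (Ring.inverse f * f) (c⁻¹ • x) := rfl
    _ = c⁻¹ • x := by rw [h1]; rfl

lemma ringInverse_sym {f : V →L[ℝ] V} (hf : IsUnit f)
    (fsym : ∀ x y : V, ⟪f x, y⟫ = ⟪x, f y⟫) (x y : V) :
    ⟪Ring.inverse f x, y⟫ = ⟪x, Ring.inverse f y⟫ := by
  have hfg : ∀ z : V, f (Ring.inverse f z) = z := fun z => by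
    have : f * Ring.inverse f = 1 := Ring.mul_inverse_cancel _ hf
    calc f (Ring.inverse f z) = (f * Ring.inverse f) z := rfl
      _ = z := by rw [this]; rfl
  calc ⟪Ring.inverse f x, y⟫ = ⟪Ring.inverse f x, f (Ring.inverse f y)⟫ := by rw [hfg]
    _ = ⟪f (Ring.inverse f x), Ring.inverse f y⟫ := (fsym _ _).symm
    _ = ⟪x, Ring.inverse f y⟫ := by rw [hfg]

end Aux

set_option maxHeartbeats 1000000 in
/-- **Refined one-body bound for `S`.** In the one-body setup, with
`S = ½(h^{-1/2}E^{1/2} − h^{1/2}E^{-1/2})` (where `hs = h^{1/2}`,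
`E = (h^{1/2}(h + 2P_v)h^{1/2})^{1/2}`, `Es = E^{1/2}`, all square roots characterized as the
unique positive semidefinite symmetric square roots), for all `i, j`:
`|⟨xᵢ, S xⱼ⟩ − ⟨xᵢ,v⟩⟨v,xⱼ⟩/(λᵢ+λⱼ)| ≤ 2⟨v, h⁻¹ v⟩ ⟨xᵢ,v⟩⟨v,xⱼ⟩/(λᵢ+λⱼ)`. -/
theorem one_body_S_refined_bound
    {V : Type*} [NormedAddCommGroup V] [InnerProductSpace ℝ V] [FiniteDimensional ℝ V]
    {ι : Type*} [Fintype ι] [Nonempty ι]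
    (b : OrthonormalBasis ι ℝ V) (lam : ι → ℝ) (hlam : ∀ i, 0 < lam i)
    (v : V) (hv : ∀ i, 0 ≤ ⟪b i, v⟫)
    (h hs E Es : V →L[ℝ] V)
    (h_eig : ∀ i, h (b i) = lam i • b i)
    (hs_sym : ∀ x y : V, ⟪hs x, y⟫ = ⟪x, hs y⟫) (hs_pos : ∀ x : V, 0 ≤ ⟪x, hs x⟫)
    (hs_sq : hs * hs = h)
    (hE_sym : ∀ x y : V, ⟪E x, y⟫ = ⟪x, E y⟫) (hE_pos : ∀ x : V, 0 ≤ ⟪x, E x⟫)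
    (hE_sq : E * E = hs * (h + (2 : ℝ) • rankOne v) * hs)
    (hEs_sym : ∀ x y : V, ⟪Es x, y⟫ = ⟪x, Es y⟫) (hEs_pos : ∀ x : V, 0 ≤ ⟪x, Es x⟫)
    (hEs_sq : Es * Es = E) :
    ∀ i j : ι,
      |⟪b i, (((1 : ℝ) / 2) • (Ring.inverse hs * Es - hs * Ring.inverse Es)) (b j)⟫ -
          ⟪b i, v⟫ * ⟪v, b j⟫ / (lam i + lam j)| ≤
        2 * ⟪v, (Ring.inverse h) v⟫ * (⟪b i, v⟫ * ⟪v, b j⟫ / (lam i + lam j)) := by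
  classical
  -- basic facts
  have hhapp : ∀ x : V, h x = hs (hs x) := fun x => by
    rw [← hs_sq]; rfl
  have hsymh : ∀ x y : V, ⟪h x, y⟫ = ⟪x, h y⟫ := fun x y => by
    rw [hhapp, hhapp, hs_sym, hs_sym]
  -- hs on the eigenbasis
  have hsb : ∀ i, hs (b i) = Real.sqrt (lam i) • b i := fun i => by
    refine sqrt_eig' hs_sym hs_pos (Real.sqrt_pos.mpr (hlam i)) ?_
    rw [← hhapp, h_eig, Real.sq_sqrt (hlam i).le]
  -- E is symmetric as a linear map; spectral theorem
  have hE_symL : LinearMap.IsSymmetric (E : V →ₗ[ℝ] V) := fun x y => hE_sym x y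
  let u : OrthonormalBasis (Fin (Module.finrank ℝ V)) ℝ V := hE_symL.eigenvectorBasis rfl
  let e : Fin (Module.finrank ℝ V) → ℝ := hE_symL.eigenvalues rfl
  have hEu : ∀ k, E (u k) = e k • u k := fun k => by
    exact_mod_cast hE_symL.apply_eigenvectorBasis rfl k
  set w := hs v with hwdef
  -- the quadratic form of E²
  have hEE : ∀ x : V, E (E x) = hs (h (hs x) + (2:ℝ) • (⟪v, hs x⟫ • v)) := by
    intro x
    have h1 : E (E x) = (E * E) x := (ContinuousLinearMap.mul_apply E E x).symm
    rw [h1, hE_sq]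
    simp only [ContinuousLinearMap.mul_apply, ContinuousLinearMap.add_apply,
      ContinuousLinearMap.smul_apply, rankOne, ContinuousLinearMap.smulRight_apply,
      innerSL_apply_apply]
  -- key relation in coordinates
  have hbw : ∀ i, ⟪b i, w⟫ = Real.sqrt (lam i) * ⟪b i, v⟫ := fun i => by
    rw [hwdef, ← hs_sym, hsb, real_inner_smul_left]
  have hrel : ∀ (i : ι) (k : Fin (Module.finrank ℝ V)),
      (e k) ^ 2 * ⟪b i, u k⟫
        = (lam i) ^ 2 * ⟪b i, u k⟫ + 2 * (Real.sqrt (lam i) * ⟪b i, v⟫) * ⟪w, u k⟫ := by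
    intro i k
    have lhs1 : ⟪b i, E (E (u k))⟫ = (e k) ^ 2 * ⟪b i, u k⟫ := by
      rw [hEu, map_smul, hEu, real_inner_smul_right, real_inner_smul_right]; ring
    have rhs1 : ⟪b i, E (E (u k))⟫
        = (lam i) ^ 2 * ⟪b i, u k⟫ + 2 * (Real.sqrt (lam i) * ⟪b i, v⟫) * ⟪w, u k⟫ := by
      rw [hEE, ← hs_sym, hsb]
      rw [real_inner_smul_left, inner_add_right]
      have e1 : ⟪b i, h (hs (u k))⟫ = lam i * (Real.sqrt (lam i) * ⟪b i, u k⟫) := by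
        rw [← hsymh, h_eig, real_inner_smul_left, ← hs_sym, hsb, real_inner_smul_left]
      have e2 : ⟪b i, ((2:ℝ) • (⟪v, hs (u k)⟫ • v))⟫
          = 2 * (⟪w, u k⟫ * ⟪b i, v⟫) := by
        rw [inner_smul_right, inner_smul_right]
        have : ⟪v, hs (u k)⟫ = ⟪w, u k⟫ := by rw [hwdef, hs_sym]
        rw [this]
      rw [e1, e2]
      have hsq : Real.sqrt (lam i) * Real.sqrt (lam i) = lam i :=
        Real.mul_self_sqrt (hlam i).le
      linear_combination (lam i * ⟪b i, u k⟫) * hsq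
    rw [← lhs1, rhs1]
  -- injectivity of h
  have hinjh : ∀ x : V, h x = 0 → x = 0 := by
    intro x hx
    have hcoord : ∀ i, ⟪b i, x⟫ = 0 := by
      intro i
      have : ⟪b i, h x⟫ = 0 := by rw [hx, inner_zero_right]
      rw [← hsymh, h_eig, real_inner_smul_left] at this
      exact (mul_eq_zero.mp this).resolve_left (ne_of_gt (hlam i))
    have := b.sum_repr' x
    rw [← this]
    simp [hcoord]
  -- quadratic identity
  have quad : ∀ x : V, ⟪x, E (E x)⟫ = ⟪h x, h x⟫ + 2 * ⟪w, x⟫ ^ 2 := by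
    intro x
    rw [hEE, ← hs_sym, inner_add_right, inner_smul_right, inner_smul_right]
    have e1 : ⟪hs x, h (hs x)⟫ = ⟪h x, h x⟫ := by
      rw [hhapp (hs x), ← hs_sym, ← hhapp]
    have e2 : ⟪v, hs x⟫ = ⟪w, x⟫ := by rw [hwdef, hs_sym]
    rw [e1, e2]
    have e3 : ⟪hs x, v⟫ = ⟪w, x⟫ := by
      rw [hwdef, hs_sym]; exact real_inner_comm (hs v) x
    rw [e3]; ring
  -- positivity of eigenvalues of E
  have hek : ∀ k, 0 < e k := by
    intro k
    have hnorm : ⟪u k, u k⟫ = 1 := by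
      have := u.orthonormal.1 k
      rw [real_inner_self_eq_norm_sq, this]; norm_num
    have h1 : ⟪u k, E (E (u k))⟫ = (e k) ^ 2 := by
      rw [hEu, map_smul, hEu, real_inner_smul_right, real_inner_smul_right, hnorm]; ring
    have h2 := quad (u k)
    have hune : u k ≠ 0 := by
      intro h0
      have hn1 := u.orthonormal.1 k
      rw [h0, norm_zero] at hn1
      norm_num at hn1
    have hhu : h (u k) ≠ 0 := fun hcon => hune (hinjh _ hcon)
    have h3 : 0 < ⟪h (u k), h (u k)⟫ := by
      have hpos : 0 < ‖h (u k)‖ := norm_pos_iff.mpr hhu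
      rw [real_inner_self_eq_norm_sq]
      exact pow_pos hpos 2
    have h4 : 0 < (e k) ^ 2 := by rw [← h1, h2]; nlinarith [sq_nonneg ⟪w, u k⟫]
    have h5 : 0 ≤ e k := by
      have := hE_pos (u k)
      rw [hEu, real_inner_smul_right, hnorm, mul_one] at this
      exact this
    rcases h5.lt_or_eq with h6 | h6
    · exact h6
    · exfalso; rw [← h6] at h4; simp at h4
  -- Es on eigenbasis of E
  have hEsu : ∀ k, Es (u k) = Real.sqrt (e k) • u k := fun k => by
    refine sqrt_eig' hEs_sym hEs_pos (Real.sqrt_pos.mpr (hek k)) ?_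
    have : Es (Es (u k)) = (Es * Es) (u k) := rfl
    rw [this, hEs_sq, hEu, Real.sq_sqrt (hek k).le]
  -- invertibility
  have hinjhs : Function.Injective hs := by
    intro x y hxy
    have : hs (x - y) = 0 := by rw [map_sub, hxy, sub_self]
    have h0 : h (x - y) = 0 := by rw [hhapp, this, map_zero]
    have := hinjh _ h0
    exact sub_eq_zero.mp this
  have hinjE : ∀ x : V, E x = 0 → x = 0 := by
    intro x hx
    have h1 : ⟪x, E (E x)⟫ = 0 := by rw [hx, map_zero, inner_zero_right]
    rw [quad] at h1
    have h2 : 0 ≤ ⟪h x, h x⟫ := real_inner_self_nonneg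
    have h3 : ⟪h x, h x⟫ = 0 := by nlinarith [sq_nonneg ⟪w, x⟫]
    exact hinjh x (inner_self_eq_zero.mp h3)
  have hinjEs : Function.Injective Es := by
    intro x y hxy
    have : Es (x - y) = 0 := by rw [map_sub, hxy, sub_self]
    have hE0 : E (x - y) = 0 := by
      have h1 : E (x - y) = (Es * Es) (x - y) := by rw [hEs_sq]
      rw [h1]
      show Es (Es (x - y)) = 0
      rw [this, map_zero]
    exact sub_eq_zero.mp (hinjE _ hE0)
  have hinjh' : Function.Injective h := by
    intro x y hxy
    have : h (x - y) = 0 := by rw [map_sub, hxy, sub_self]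
    exact sub_eq_zero.mp (hinjh _ this)
  have hUhs : IsUnit hs := isUnit_of_inj hinjhs
  have hUEs : IsUnit Es := isUnit_of_inj hinjEs
  have hUh : IsUnit h := isUnit_of_inj hinjh'
  have hinvhs : ∀ i, Ring.inverse hs (b i) = (Real.sqrt (lam i))⁻¹ • b i := fun i =>
    ringInverse_apply_eig hUhs (ne_of_gt (Real.sqrt_pos.mpr (hlam i))) (hsb i)
  have hinvEs : ∀ k, Ring.inverse Es (u k) = (Real.sqrt (e k))⁻¹ • u k := fun k =>
    ringInverse_apply_eig hUEs (ne_of_gt (Real.sqrt_pos.mpr (hek k))) (hEsu k)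
  have hinvh : ∀ i, Ring.inverse h (b i) = (lam i)⁻¹ • b i := fun i =>
    ringInverse_apply_eig hUh (ne_of_gt (hlam i)) (h_eig i)
  have hsyminvhs := ringInverse_sym hUhs hs_sym
  have hsyminvEs := ringInverse_sym hUEs hEs_sym
  have hsyminvh := ringInverse_sym hUh hsymh
  -- the value of μ = ⟨v, h⁻¹ v⟩
  set μ : ℝ := ∑ i, ⟪b i, v⟫ ^ 2 / lam i with hμdef
  have hμ0 : 0 ≤ μ := by
    apply Finset.sum_nonneg
    intro i _
    have := hlam i
    positivity
  have hmu : ⟪v, (Ring.inverse h) v⟫ = μ := by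
    rw [← b.sum_inner_mul_inner v (Ring.inverse h v), hμdef]
    apply Finset.sum_congr rfl
    intro i _
    rw [← hsyminvh, hinvh, real_inner_smul_left, real_inner_comm v (b i)]
    field_simp
  -- the key sum bound : ∑ k, ⟪w, u k⟫² / (e k)² ≤ μ
  have hP : ∑ k, ⟪w, u k⟫ ^ 2 / (e k) ^ 2 ≤ μ := by
    set P : ℝ := ∑ k, ⟪w, u k⟫ ^ 2 / (e k) ^ 2 with hPdef
    have hP0 : 0 ≤ P := by
      apply Finset.sum_nonneg; intro k _; positivity
    set x0 : V := ∑ k, (⟪w, u k⟫ / (e k) ^ 2) • u k with hx0def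
    have hux : ∀ k, ⟪u k, x0⟫ = ⟪w, u k⟫ / (e k) ^ 2 := fun k =>
      u.orthonormal.inner_right_fintype _ k
    have hwx : ⟪w, x0⟫ = P := by
      rw [← u.sum_inner_mul_inner w x0, hPdef]
      apply Finset.sum_congr rfl
      intro k _
      rw [hux]
      ring
    have hE2x : E (E x0) = w := by
      rw [hx0def, map_sum]
      have : ∀ k, E ((⟪w, u k⟫ / (e k) ^ 2) • u k) = (⟪w, u k⟫ / e k) • u k := by
        intro k
        rw [map_smul, hEu, smul_smul]
        congr 1
        have hek' : e k ≠ 0 := (hek k).ne'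
        field_simp
      rw [Finset.sum_congr rfl (fun k _ => this k), map_sum]
      have h2 : ∀ k, E ((⟪w, u k⟫ / e k) • u k) = ⟪u k, w⟫ • u k := by
        intro k
        rw [map_smul, hEu, smul_smul, real_inner_comm]
        congr 1
        have hek' : e k ≠ 0 := (hek k).ne'
        field_simp
      rw [Finset.sum_congr rfl (fun k _ => h2 k)]
      exact u.sum_repr' w
    have hq := quad x0
    rw [hE2x] at hq
    have hxw : ⟪x0, w⟫ = P := by rw [real_inner_comm]; exact hwx
    rw [hxw, hwx] at hq
    -- hq : P = ⟪h x0, h x0⟫ + 2 P²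
    set y0 : V := ∑ i, (⟪b i, v⟫ / Real.sqrt (lam i)) • b i with hy0def
    have hy : h y0 = w := by
      rw [hy0def, map_sum]
      have : ∀ i, h ((⟪b i, v⟫ / Real.sqrt (lam i)) • b i) = ⟪b i, w⟫ • b i := by
        intro i
        rw [map_smul, h_eig, smul_smul, hbw]
        congr 1
        have hsqrt_ne : Real.sqrt (lam i) ≠ 0 := ne_of_gt (Real.sqrt_pos.mpr (hlam i))
        have hsq : Real.sqrt (lam i) * Real.sqrt (lam i) = lam i :=
          Real.mul_self_sqrt (hlam i).le
        field_simp
        linear_combination (-⟪b i, v⟫) * (Real.sq_sqrt (hlam i).le)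
      rw [Finset.sum_congr rfl (fun i _ => this i)]
      exact b.sum_repr' w
    have hynorm : ⟪y0, y0⟫ = μ := by
      rw [hy0def, hμdef]
      rw [b.orthonormal.inner_sum]
      apply Finset.sum_congr rfl
      intro i _
      have hsq : Real.sqrt (lam i) * Real.sqrt (lam i) = lam i :=
        Real.mul_self_sqrt (hlam i).le
      simp only [starRingEnd_apply, star_trivial]
      rw [div_mul_div_comm, hsq]
      ring
    have hCS : P ≤ ‖y0‖ * ‖h x0‖ := by
      have h1 : ⟪y0, h x0⟫ = P := by rw [← hsymh, hy, hwx]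
      calc P = ⟪y0, h x0⟫ := h1.symm
        _ ≤ ‖y0‖ * ‖h x0‖ := real_inner_le_norm _ _
    have hy2 : ‖y0‖ ^ 2 = μ := by rw [← real_inner_self_eq_norm_sq]; exact hynorm
    have hx2 : ‖h x0‖ ^ 2 ≤ P := by
      rw [← real_inner_self_eq_norm_sq]
      nlinarith [sq_nonneg P, hq]
    nlinarith [hCS, hy2, hx2, hP0, norm_nonneg y0, norm_nonneg (h x0), hμ0]
  -- now the main estimate
  intro i j
  have hp : 0 < Real.sqrt (lam i) := Real.sqrt_pos.mpr (hlam i)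
  have hq : 0 < Real.sqrt (lam j) := Real.sqrt_pos.mpr (hlam j)
  have hpe : Real.sqrt (lam i) ^ 2 = lam i := Real.sq_sqrt (hlam i).le
  have hqe : Real.sqrt (lam j) ^ 2 = lam j := Real.sq_sqrt (hlam j).le
  have hsr : ∀ k, 0 < Real.sqrt (e k) := fun k => Real.sqrt_pos.mpr (hek k)
  have hre : ∀ k, Real.sqrt (e k) ^ 2 = e k := fun k => Real.sq_sqrt (hek k).le
  have hvi0 : 0 ≤ ⟪b i, v⟫ := hv i
  have hvj0 : 0 ≤ ⟪b j, v⟫ := hv j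
  have hΛ : 0 < lam i + lam j := by have := hlam i; have := hlam j; linarith
  -- the matrix element
  have hM : ⟪b i, (((1 : ℝ) / 2) • (Ring.inverse hs * Es - hs * Ring.inverse Es)) (b j)⟫
      = ∑ k, (1/2) * (⟪b i, u k⟫ * ⟪b j, u k⟫ *
          (Real.sqrt (e k) * (Real.sqrt (lam i))⁻¹ - Real.sqrt (lam i) * (Real.sqrt (e k))⁻¹)) := by
    have happ : (((1 : ℝ) / 2) • (Ring.inverse hs * Es - hs * Ring.inverse Es)) (b j)
        = ((1:ℝ)/2) • (Ring.inverse hs (Es (b j)) - hs (Ring.inverse Es (b j))) := by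
      simp only [ContinuousLinearMap.smul_apply, ContinuousLinearMap.sub_apply,
        ContinuousLinearMap.mul_apply]
    rw [happ, real_inner_smul_right, inner_sub_right]
    have hA1 : ⟪b i, Ring.inverse hs (Es (b j))⟫
        = (Real.sqrt (lam i))⁻¹ * ∑ k, ⟪b i, u k⟫ * (Real.sqrt (e k) * ⟪b j, u k⟫) := by
      rw [← hsyminvhs, hinvhs, real_inner_smul_left]
      congr 1
      rw [← u.sum_inner_mul_inner (b i) (Es (b j))]
      apply Finset.sum_congr rfl
      intro k _
      have : ⟪u k, Es (b j)⟫ = Real.sqrt (e k) * ⟪b j, u k⟫ := by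
        rw [← hEs_sym, hEsu, real_inner_smul_left, real_inner_comm (u k) (b j)]
      rw [this]
    have hA2 : ⟪b i, hs (Ring.inverse Es (b j))⟫
        = Real.sqrt (lam i) * ∑ k, ⟪b i, u k⟫ * ((Real.sqrt (e k))⁻¹ * ⟪b j, u k⟫) := by
      rw [← hs_sym, hsb, real_inner_smul_left]
      congr 1
      rw [← u.sum_inner_mul_inner (b i) (Ring.inverse Es (b j))]
      apply Finset.sum_congr rfl
      intro k _
      have : ⟪u k, Ring.inverse Es (b j)⟫ = (Real.sqrt (e k))⁻¹ * ⟪b j, u k⟫ := by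
        rw [← hsyminvEs, hinvEs, real_inner_smul_left, real_inner_comm (u k) (b j)]
      rw [this]
    rw [hA1, hA2, Finset.mul_sum, Finset.mul_sum, ← Finset.sum_sub_distrib, Finset.mul_sum]
    apply Finset.sum_congr rfl
    intro k _
    ring
  -- relations in sqrt variables
  have reli : ∀ k, ⟪b i, u k⟫ *
        (Real.sqrt (e k) ^ 2 * Real.sqrt (e k) ^ 2 - Real.sqrt (lam i) ^ 2 * Real.sqrt (lam i) ^ 2)
      = 2 * Real.sqrt (lam i) * ⟪b i, v⟫ * ⟪w, u k⟫ := by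
    intro k
    linear_combination (hrel i k) + ⟪b i, u k⟫ * (Real.sqrt (e k) ^ 2 + e k) * (hre k)
      - ⟪b i, u k⟫ * (Real.sqrt (lam i) ^ 2 + lam i) * hpe
  have relj : ∀ k, ⟪b j, u k⟫ *
        (Real.sqrt (e k) ^ 2 * Real.sqrt (e k) ^ 2 - Real.sqrt (lam j) ^ 2 * Real.sqrt (lam j) ^ 2)
      = 2 * Real.sqrt (lam j) * ⟪b j, v⟫ * ⟪w, u k⟫ := by
    intro k
    linear_combination (hrel j k) + ⟪b j, u k⟫ * (Real.sqrt (e k) ^ 2 + e k) * (hre k)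
      - ⟪b j, u k⟫ * (Real.sqrt (lam j) ^ 2 + lam j) * hqe
  -- the correction terms
  set rr : Fin (Module.finrank ℝ V) → ℝ := fun k =>
    2 * ⟪b j, v⟫ * ⟪w, u k⟫ ^ 2 *
        (Real.sqrt (lam i) ^ 2 + Real.sqrt (e k) ^ 2 + Real.sqrt (lam j) ^ 2
          + Real.sqrt (lam j) * Real.sqrt (e k)) /
      ((Real.sqrt (e k) ^ 2 + Real.sqrt (lam j) ^ 2) * (Real.sqrt (lam j) + Real.sqrt (e k)) *
        (Real.sqrt (e k) ^ 2 + Real.sqrt (lam i) ^ 2) * Real.sqrt (e k)) with hrrdef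
  have key : ∀ k, (1/2) * (⟪b i, u k⟫ * ⟪b j, u k⟫ *
        (Real.sqrt (e k) * (Real.sqrt (lam i))⁻¹ - Real.sqrt (lam i) * (Real.sqrt (e k))⁻¹))
      = ⟪b i, v⟫ / (lam i + lam j) * (⟪w, u k⟫ * ⟪b j, u k⟫ / Real.sqrt (lam j) - rr k) := by
    intro k
    have hr := hsr k
    have step1 : (1/2) * (⟪b i, u k⟫ * ⟪b j, u k⟫ *
          (Real.sqrt (e k) * (Real.sqrt (lam i))⁻¹ - Real.sqrt (lam i) * (Real.sqrt (e k))⁻¹))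
        = ⟪b i, v⟫ * (⟪w, u k⟫ * ⟪b j, u k⟫) /
            ((Real.sqrt (e k) ^ 2 + Real.sqrt (lam i) ^ 2) * Real.sqrt (e k)) := by
      have hden : (Real.sqrt (e k) ^ 2 + Real.sqrt (lam i) ^ 2) ≠ 0 := by positivity
      field_simp
      linear_combination (⟪b j, u k⟫) * reli k
    rw [step1]
    simp only [hrrdef]
    rw [show lam i + lam j = Real.sqrt (lam i) ^ 2 + Real.sqrt (lam j) ^ 2 by rw [hpe, hqe]]
    have hd1 : (Real.sqrt (e k) ^ 2 + Real.sqrt (lam i) ^ 2) * Real.sqrt (e k) ≠ 0 := by positivity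
    have hd2 : ((Real.sqrt (e k) ^ 2 + Real.sqrt (lam j) ^ 2) * (Real.sqrt (lam j) + Real.sqrt (e k)) *
        (Real.sqrt (e k) ^ 2 + Real.sqrt (lam i) ^ 2) * Real.sqrt (e k)) ≠ 0 := by positivity
    have hd3 : Real.sqrt (lam j) * ((Real.sqrt (e k) ^ 2 + Real.sqrt (lam j) ^ 2) *
        (Real.sqrt (lam j) + Real.sqrt (e k)) *
        (Real.sqrt (e k) ^ 2 + Real.sqrt (lam i) ^ 2) * Real.sqrt (e k)) ≠ 0 := by positivity
    have hd4 : (Real.sqrt (lam i) ^ 2 + Real.sqrt (lam j) ^ 2) *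
        (Real.sqrt (lam j) * ((Real.sqrt (e k) ^ 2 + Real.sqrt (lam j) ^ 2) *
          (Real.sqrt (lam j) + Real.sqrt (e k)) *
          (Real.sqrt (e k) ^ 2 + Real.sqrt (lam i) ^ 2) * Real.sqrt (e k))) ≠ 0 := by positivity
    rw [div_sub_div _ _ (ne_of_gt hq) hd2, div_mul_div_comm, div_eq_div_iff hd1 hd4]
    linear_combination (-(⟪b i, v⟫ * ⟪w, u k⟫ *
      (Real.sqrt (lam i) ^ 2 + Real.sqrt (e k) ^ 2 + Real.sqrt (lam j) ^ 2
        + Real.sqrt (lam j) * Real.sqrt (e k)) *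
      ((Real.sqrt (e k) ^ 2 + Real.sqrt (lam i) ^ 2) * Real.sqrt (e k)))) * relj k
  -- sum of wk * c2
  have hsum1 : ∑ k, ⟪w, u k⟫ * ⟪b j, u k⟫ = Real.sqrt (lam j) * ⟪b j, v⟫ := by
    have h1 : ⟪w, b j⟫ = Real.sqrt (lam j) * ⟪b j, v⟫ := by
      rw [real_inner_comm, hbw j]
    rw [← h1, ← u.sum_inner_mul_inner w (b j)]
    apply Finset.sum_congr rfl
    intro k _
    rw [real_inner_comm (u k) (b j)]
  -- closed form for M
  have hM2 : ⟪b i, (((1 : ℝ) / 2) • (Ring.inverse hs * Es - hs * Ring.inverse Es)) (b j)⟫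
      = ⟪b i, v⟫ / (lam i + lam j) * (⟪b j, v⟫ - ∑ k, rr k) := by
    rw [hM, Finset.sum_congr rfl (fun k _ => key k), ← Finset.mul_sum]
    congr 1
    rw [Finset.sum_sub_distrib, ← Finset.sum_div, hsum1]
    congr 1
    rw [mul_comm (Real.sqrt (lam j)) ⟪b j, v⟫, mul_div_assoc, div_self (ne_of_gt hq), mul_one]
  -- bounds on rr
  have hrr0 : ∀ k, 0 ≤ rr k := by
    intro k
    simp only [hrrdef]
    have h1 := hsr k
    have h2 := sq_nonneg ⟪w, u k⟫
    positivity
  have hrrle : ∀ k, rr k ≤ 2 * ⟪b j, v⟫ * (⟪w, u k⟫ ^ 2 / (e k) ^ 2) := by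
    intro k
    have hr := hsr k
    have base : rr k ≤ 2 * ⟪b j, v⟫ * ⟪w, u k⟫ ^ 2 / ((Real.sqrt (e k) ^ 2) ^ 2) := by
      simp only [hrrdef]
      rw [div_le_div_iff₀ (by positivity) (by positivity)]
      have hkey : Real.sqrt (e k) ^ 3 *
            (Real.sqrt (lam i) ^ 2 + Real.sqrt (e k) ^ 2 + Real.sqrt (lam j) ^ 2
              + Real.sqrt (lam j) * Real.sqrt (e k))
          ≤ (Real.sqrt (e k) ^ 2 + Real.sqrt (lam j) ^ 2) * (Real.sqrt (lam j) + Real.sqrt (e k)) *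
            (Real.sqrt (e k) ^ 2 + Real.sqrt (lam i) ^ 2) := by
        nlinarith [mul_pos hq hr, sq_nonneg (Real.sqrt (lam i)),
          mul_pos (mul_pos hq hq) hq, mul_pos (mul_pos hq hq) (mul_pos hr hr),
          mul_nonneg (mul_nonneg hq.le hr.le) (sq_nonneg (Real.sqrt (lam i))),
          mul_nonneg (mul_nonneg hq.le (sq_nonneg (Real.sqrt (lam i)))) (mul_nonneg hq.le hq.le),
          mul_nonneg (sq_nonneg (Real.sqrt (lam j) * Real.sqrt (lam i))) hr.le]
      have hB : 0 ≤ 2 * ⟪b j, v⟫ * ⟪w, u k⟫ ^ 2 * Real.sqrt (e k) := by positivity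
      nlinarith [mul_le_mul_of_nonneg_left hkey hB]
    calc rr k ≤ 2 * ⟪b j, v⟫ * ⟪w, u k⟫ ^ 2 / ((Real.sqrt (e k) ^ 2) ^ 2) := base
      _ = 2 * ⟪b j, v⟫ * (⟪w, u k⟫ ^ 2 / (e k) ^ 2) := by rw [hre k, mul_div_assoc]
  have hsumrr : ∑ k, rr k ≤ 2 * ⟪b j, v⟫ * μ := by
    calc ∑ k, rr k ≤ ∑ k, 2 * ⟪b j, v⟫ * (⟪w, u k⟫ ^ 2 / (e k) ^ 2) :=
          Finset.sum_le_sum (fun k _ => hrrle k)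
      _ = 2 * ⟪b j, v⟫ * ∑ k, ⟪w, u k⟫ ^ 2 / (e k) ^ 2 := by rw [Finset.mul_sum]
      _ ≤ 2 * ⟪b j, v⟫ * μ := by
          apply mul_le_mul_of_nonneg_left hP (by positivity)
  have hsumrr0 : 0 ≤ ∑ k, rr k := Finset.sum_nonneg (fun k _ => hrr0 k)
  -- conclude
  rw [hM2, hmu, real_inner_comm (b j) v]
  have heq : ⟪b i, v⟫ / (lam i + lam j) * (⟪b j, v⟫ - ∑ k, rr k)
        - ⟪b i, v⟫ * ⟪b j, v⟫ / (lam i + lam j)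
      = -(⟪b i, v⟫ / (lam i + lam j) * ∑ k, rr k) := by
    have hΛ' : lam i + lam j ≠ 0 := ne_of_gt hΛ
    field_simp
    ring
  rw [heq, abs_neg, abs_of_nonneg (mul_nonneg (div_nonneg hvi0 hΛ.le) hsumrr0)]
  calc ⟪b i, v⟫ / (lam i + lam j) * ∑ k, rr k
      ≤ ⟪b i, v⟫ / (lam i + lam j) * (2 * ⟪b j, v⟫ * μ) := by
        apply mul_le_mul_of_nonneg_left hsumrr (div_nonneg hvi0 hΛ.le)
    _ = 2 * μ * (⟪b i, v⟫ * ⟪b j, v⟫ / (lam i + lam j)) := by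
        have hΛ' : lam i + lam j ≠ 0 := ne_of_gt hΛ
        field_simp
end

section
/- Suppose V̂ : ℤ³\{0} → [0,∞) satisfies V̂_k ≤ C_V |k|^{-2} for all k ∈ ℤ³\{0}, for a constant C_V > 0. Then there is a constant C > 0, depending only on C_V, such that for every k_F ≥ 1: Σ_{k ∈ ℤ³\{0}} V̂_k² · min{|k|, k_F} ≤ C (1 + log k_F). In particular, for every ε > 0 there is a constant C_ε > 0 depending only on C_V and ε with Σ_{k ∈ ℤ³\{0}} V̂_k² · min{|k|, k_F} ≤ C_ε k_F^ε for all k_F ≥ 1. -/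
noncomputable section

namespace PotAux

open Finset

/-- sup norm as a natural number -/
def supN (k : Z3) : ℕ := Finset.univ.sup fun i => (k i).natAbs

lemma coord_le_supN (k : Z3) (i : Fin 3) : (k i).natAbs ≤ supN k :=
  Finset.le_sup (f := fun i => (k i).natAbs) (Finset.mem_univ i)

lemma exists_supN (k : Z3) : ∃ i, (k i).natAbs = supN k := by
  obtain ⟨i, -, hi⟩ := Finset.exists_mem_eq_sup Finset.univ ⟨0, Finset.mem_univ 0⟩
    (fun i => (k i).natAbs)
  exact ⟨i, hi.symm⟩

lemma supN_pos {k : Z3} (hk : k ≠ 0) : 1 ≤ supN k := by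
  have : ∃ i, k i ≠ 0 := by
    by_contra h
    push_neg at h
    exact hk (funext h)
  obtain ⟨i, hi⟩ := this
  have h1 : 1 ≤ (k i).natAbs := Int.natAbs_pos.mpr hi
  exact le_trans h1 (coord_le_supN k i)

lemma le_nsq (k : Z3) : ((supN k : ℝ))^2 ≤ nsq k := by
  obtain ⟨i, hi⟩ := exists_supN k
  have h : ((supN k : ℝ))^2 = ((k i : ℝ))^2 := by
    rw [← hi, Nat.cast_natAbs]
    push_cast
    rw [sq_abs]
  rw [h, nsq]
  exact Finset.single_le_sum (f := fun j => ((k j : ℝ))^2) (fun j _ => sq_nonneg _)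
    (Finset.mem_univ i)

lemma nsq_le (k : Z3) : nsq k ≤ 3 * ((supN k : ℝ))^2 := by
  have h : ∀ i : Fin 3, ((k i : ℝ))^2 ≤ ((supN k : ℝ))^2 := by
    intro i
    have h1 := coord_le_supN k i
    have : |((k i : ℝ))| ≤ (supN k : ℝ) := by
      rw [← Int.cast_abs]
      rw [Int.abs_eq_natAbs]
      exact_mod_cast h1
    calc ((k i : ℝ))^2 = |((k i : ℝ))|^2 := (sq_abs _).symm
      _ ≤ ((supN k : ℝ))^2 := by
          apply pow_le_pow_left₀ (abs_nonneg _) this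
  calc nsq k = ∑ i, ((k i : ℝ))^2 := rfl
    _ ≤ ∑ _i : Fin 3, ((supN k : ℝ))^2 := Finset.sum_le_sum (fun i _ => h i)
    _ = 3 * ((supN k : ℝ))^2 := by
        rw [Finset.sum_const, Finset.card_univ, Fintype.card_fin, nsmul_eq_mul]
        norm_num

lemma nrm_le (k : Z3) : nrm k ≤ 2 * (supN k : ℝ) := by
  rw [nrm]
  have h1 : nsq k ≤ (2 * (supN k : ℝ))^2 := by
    calc nsq k ≤ 3 * ((supN k : ℝ))^2 := nsq_le k
      _ ≤ 4 * ((supN k : ℝ))^2 := by nlinarith [sq_nonneg ((supN k : ℝ))]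
      _ = (2 * (supN k : ℝ))^2 := by ring
  calc Real.sqrt (nsq k) ≤ Real.sqrt ((2 * (supN k : ℝ))^2) := Real.sqrt_le_sqrt h1
    _ = 2 * (supN k : ℝ) := Real.sqrt_sq (by positivity)

/-- telescoping bound -/
lemma sum_Icc_inv_sq_le (N : ℕ) (hN : 1 ≤ N) (K : ℕ) (hK : N ≤ K) :
    ∑ m ∈ Finset.Icc (N+1) K, (1:ℝ)/(m:ℝ)^2 ≤ 1/(N:ℝ) - 1/(K:ℝ) := by
  induction K, hK using Nat.le_induction with
  | base => simp
  | succ K hK ih =>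
    rw [Finset.sum_Icc_succ_top (by omega)]
    have hKpos : (0:ℝ) < (K:ℝ) := by
      have : 1 ≤ K := le_trans hN hK
      exact_mod_cast this
    have hstep : (1:ℝ)/((K:ℝ)+1)^2 ≤ 1/(K:ℝ) - 1/((K:ℝ)+1) := by
      rw [div_sub_div _ _ (ne_of_gt hKpos) (by positivity)]
      rw [div_le_div_iff₀ (by positivity) (by positivity)]
      ring_nf
      nlinarith
    push_cast
    linarith

/-- the 1-d sum bound -/
lemma sum_min_le (kF : ℝ) (hkF : 1 ≤ kF) (F : Finset ℕ) :
    ∑ m ∈ F, min (m:ℝ) kF / (m:ℝ)^2 ≤ 3 * (1 + Real.log kF) := by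
  have hkF0 : 0 < kF := lt_of_lt_of_le zero_lt_one hkF
  set N := ⌊kF⌋₊ with hNdef
  have hN1 : 1 ≤ N := (Nat.one_le_floor_iff kF).mpr hkF
  have hNle : (N:ℝ) ≤ kF := Nat.floor_le (le_of_lt hkF0)
  have hltN : kF < (N:ℝ) + 1 := Nat.lt_floor_add_one kF
  have hterm_nonneg : ∀ m : ℕ, 0 ≤ min (m:ℝ) kF / (m:ℝ)^2 := by
    intro m
    apply div_nonneg _ (sq_nonneg _)
    exact le_min (by positivity) (le_of_lt hkF0)
  -- split
  classical
  have hsplit : ∑ m ∈ F, min (m:ℝ) kF / (m:ℝ)^2 =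
      ∑ m ∈ F.filter (· ≤ N), min (m:ℝ) kF / (m:ℝ)^2
      + ∑ m ∈ F.filter (fun m => ¬ m ≤ N), min (m:ℝ) kF / (m:ℝ)^2 :=
    (Finset.sum_filter_add_sum_filter_not F _ _).symm
  -- part A
  have hA : ∑ m ∈ F.filter (· ≤ N), min (m:ℝ) kF / (m:ℝ)^2 ≤ 1 + Real.log kF := by
    have hsub : F.filter (· ≤ N) ⊆ Finset.Icc 0 N := by
      intro m hm
      simp only [Finset.mem_filter] at hm
      simp [hm.2]
    have h1 : ∑ m ∈ F.filter (· ≤ N), min (m:ℝ) kF / (m:ℝ)^2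
        ≤ ∑ m ∈ Finset.Icc 0 N, min (m:ℝ) kF / (m:ℝ)^2 :=
      Finset.sum_le_sum_of_subset_of_nonneg hsub (fun m _ _ => hterm_nonneg m)
    have h2 : ∑ m ∈ Finset.Icc 0 N, min (m:ℝ) kF / (m:ℝ)^2
        ≤ ∑ m ∈ Finset.Icc 1 N, (1:ℝ)/(m:ℝ) := by
      have h0 : Finset.Icc 0 N = insert 0 (Finset.Icc 1 N) := by
        ext m
        simp [Nat.lt_iff_add_one_le]
        omega
      rw [h0, Finset.sum_insert (by simp)]
      have hzero : min ((0:ℕ):ℝ) kF / ((0:ℕ):ℝ)^2 = 0 := by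
        norm_num
      rw [hzero, zero_add]
      apply Finset.sum_le_sum
      intro m hm
      simp only [Finset.mem_Icc] at hm
      have hm1 : (1:ℝ) ≤ (m:ℝ) := by exact_mod_cast hm.1
      have : min (m:ℝ) kF ≤ (m:ℝ) := min_le_left _ _
      calc min (m:ℝ) kF / (m:ℝ)^2 ≤ (m:ℝ)/(m:ℝ)^2 := by gcongr
          _ = 1/(m:ℝ) := by
            rw [sq]
            rw [div_mul_eq_div_div_swap]
            rw [div_self (by linarith)]
    have h3 : ∑ m ∈ Finset.Icc 1 N, (1:ℝ)/(m:ℝ) = (harmonic N : ℝ) := by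
      rw [harmonic_eq_sum_Icc]
      push_cast
      apply Finset.sum_congr rfl
      intro m hm
      rw [one_div]
    have h4 : (harmonic N : ℝ) ≤ 1 + Real.log N := harmonic_le_one_add_log N
    have h5 : Real.log N ≤ Real.log kF := Real.log_le_log (by exact_mod_cast hN1) hNle
    linarith
  -- part B
  have hB : ∑ m ∈ F.filter (fun m => ¬ m ≤ N), min (m:ℝ) kF / (m:ℝ)^2 ≤ 2 := by
    set G := F.filter (fun m => ¬ m ≤ N) with hG
    by_cases hGe : G = ∅
    · simp [hGe]
    · have hGne : G.Nonempty := Finset.nonempty_of_ne_empty hGe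
      set K := G.max' hGne with hK
      have hsub : G ⊆ Finset.Icc (N+1) K := by
        intro m hm
        have hm2 := hm
        simp only [hG, Finset.mem_filter] at hm2
        simp only [Finset.mem_Icc]
        exact ⟨by omega, Finset.le_max' G m hm⟩
      have hNK : N ≤ K := by
        obtain ⟨g, hg⟩ := hGne
        have h := hsub hg
        simp only [Finset.mem_Icc] at h
        omega
      have h1 : ∑ m ∈ G, min (m:ℝ) kF / (m:ℝ)^2 ≤ ∑ m ∈ G, kF/(m:ℝ)^2 := by
        apply Finset.sum_le_sum
        intro m hm
        gcongr
        exact min_le_right _ _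
      have h2 : ∑ m ∈ G, kF/(m:ℝ)^2 = kF * ∑ m ∈ G, (1:ℝ)/(m:ℝ)^2 := by
        rw [Finset.mul_sum]
        apply Finset.sum_congr rfl
        intros; rw [mul_one_div]
      have h3 : ∑ m ∈ G, (1:ℝ)/(m:ℝ)^2 ≤ ∑ m ∈ Finset.Icc (N+1) K, (1:ℝ)/(m:ℝ)^2 :=
        Finset.sum_le_sum_of_subset_of_nonneg hsub (fun m _ _ => by positivity)
      have h4 : ∑ m ∈ Finset.Icc (N+1) K, (1:ℝ)/(m:ℝ)^2 ≤ 1/(N:ℝ) := by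
        have := sum_Icc_inv_sq_le N hN1 K hNK
        have hKpos : (0:ℝ) ≤ 1/(K:ℝ) := by positivity
        linarith
      have hNpos : (0:ℝ) < N := by exact_mod_cast hN1
      have h5 : kF * (1/(N:ℝ)) ≤ 2 := by
        rw [mul_one_div]
        rw [div_le_iff₀ hNpos]
        have : (N:ℝ) + 1 ≤ 2*N := by
          have : (1:ℝ) ≤ (N:ℝ) := by exact_mod_cast hN1
          linarith
        linarith
      calc ∑ m ∈ G, min (m:ℝ) kF / (m:ℝ)^2 ≤ kF * ∑ m ∈ G, (1:ℝ)/(m:ℝ)^2 := by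
            rw [← h2]; exact h1
        _ ≤ kF * (1/(N:ℝ)) := by
            apply mul_le_mul_of_nonneg_left _ (le_of_lt hkF0)
            exact le_trans h3 h4
        _ ≤ 2 := h5
  have hlog : 0 ≤ Real.log kF := Real.log_nonneg hkF
  rw [hsplit]
  linarith

/-- box and shell -/
def box (m : ℕ) : Finset Z3 := Fintype.piFinset fun _ => Finset.Icc (-(m:ℤ)) m

def shell (m : ℕ) : Finset Z3 := (box m).filter fun k => supN k = m

lemma mem_shell {m : ℕ} {k : Z3} (hk : supN k = m) : k ∈ shell m := by
  rw [shell, Finset.mem_filter]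
  refine ⟨?_, hk⟩
  rw [box, Fintype.mem_piFinset]
  intro i
  have h := coord_le_supN k i
  rw [hk] at h
  simp only [Finset.mem_Icc]
  constructor <;> omega

lemma card_shell_le (m : ℕ) (hm : 1 ≤ m) : (shell m).card ≤ 54 * m^2 := by
  classical
  have hsub : shell m ⊆ Finset.univ.biUnion (fun i : Fin 3 =>
      Fintype.piFinset (Function.update (fun _ : Fin 3 => Finset.Icc (-(m:ℤ)) m) i
        ({(m:ℤ), -(m:ℤ)} : Finset ℤ))) := by
    intro k hk
    rw [shell, Finset.mem_filter] at hk
    obtain ⟨hbox, hsup⟩ := hk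
    rw [box, Fintype.mem_piFinset] at hbox
    obtain ⟨i, hi⟩ := exists_supN k
    rw [hsup] at hi
    rw [Finset.mem_biUnion]
    refine ⟨i, Finset.mem_univ i, ?_⟩
    rw [Fintype.mem_piFinset]
    intro j
    by_cases hji : j = i
    · subst hji
      rw [Function.update_self]
      have : k j = (m:ℤ) ∨ k j = -(m:ℤ) := by
        rcases Int.natAbs_eq (k j) with h | h
        · left; rw [h, hi]
        · right; rw [h, hi]
      simp only [Finset.mem_insert, Finset.mem_singleton]
      tauto
    · rw [Function.update_of_ne hji]
      exact hbox j
  have hcard : ∀ i : Fin 3, (Fintype.piFinset (Function.update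
      (fun _ : Fin 3 => Finset.Icc (-(m:ℤ)) m) i ({(m:ℤ), -(m:ℤ)} : Finset ℤ))).card
      ≤ 2 * (2*m+1)^2 := by
    intro i
    rw [Fintype.card_piFinset]
    have hpt : ∀ j : Fin 3, (Function.update (fun _ : Fin 3 => Finset.Icc (-(m:ℤ)) m) i
        ({(m:ℤ), -(m:ℤ)} : Finset ℤ) j).card
        = Function.update (fun _ : Fin 3 => (Finset.Icc (-(m:ℤ)) (m:ℤ)).card) i
          (({(m:ℤ), -(m:ℤ)} : Finset ℤ).card) j := by
      intro j
      by_cases hj : j = i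
      · rw [hj, Function.update_self, Function.update_self]
      · rw [Function.update_of_ne hj, Function.update_of_ne hj]
    rw [Finset.prod_congr rfl (fun j _ => hpt j)]
    rw [Finset.prod_update_of_mem (Finset.mem_univ i)]
    have h1 : ({(m:ℤ), -(m:ℤ)} : Finset ℤ).card ≤ 2 := Finset.card_insert_le _ _ |>.trans (by simp)
    have h2 : ∏ j ∈ Finset.univ \ {i}, (Finset.Icc (-(m:ℤ)) (m:ℤ)).card = (2*m+1)^2 := by
      rw [Finset.prod_const]
      have hc : (Finset.Icc (-(m:ℤ)) (m:ℤ)).card = 2*m+1 := by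
        rw [Int.card_Icc]
        omega
      rw [hc]
      congr 1
      rw [Finset.card_sdiff_of_subset (by simp)]
      simp
    calc ({(m:ℤ), -(m:ℤ)} : Finset ℤ).card * ∏ j ∈ Finset.univ \ {i},
          (Finset.Icc (-(m:ℤ)) (m:ℤ)).card
        ≤ 2 * ∏ j ∈ Finset.univ \ {i}, (Finset.Icc (-(m:ℤ)) (m:ℤ)).card :=
          Nat.mul_le_mul_right _ h1
      _ = 2 * (2*m+1)^2 := by rw [h2]
  calc (shell m).card ≤ _ := Finset.card_le_card hsub
    _ ≤ ∑ i : Fin 3, (Fintype.piFinset (Function.update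
        (fun _ : Fin 3 => Finset.Icc (-(m:ℤ)) m) i ({(m:ℤ), -(m:ℤ)} : Finset ℤ))).card :=
        Finset.card_biUnion_le
    _ ≤ ∑ _i : Fin 3, 2 * (2*m+1)^2 := Finset.sum_le_sum (fun i _ => hcard i)
    _ = 6 * (2*m+1)^2 := by
        rw [Finset.sum_const, Finset.card_univ, Fintype.card_fin, smul_eq_mul]
        ring
    _ ≤ 54 * m^2 := by nlinarith


lemma g_zero (CV kF : ℝ) (hkF : 1 ≤ kF) :
    2*CV^2 * min ((0:ℕ):ℝ) kF / ((0:ℕ):ℝ)^4 = 0 := by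
  norm_num

lemma main_bound (CV : ℝ) (hCV : 0 < CV) (V : Z3 → ℝ)
    (hV0 : ∀ k : Z3, k ≠ 0 → 0 ≤ V k) (hVb : ∀ k : Z3, k ≠ 0 → V k ≤ CV / nsq k)
    (kF : ℝ) (hkF : 1 ≤ kF) :
    ∑' k : {k : Z3 // k ≠ 0}, ENNReal.ofReal ((V ↑k) ^ 2 * min (nrm ↑k) kF) ≤
      ENNReal.ofReal (324 * CV^2 * (1 + Real.log kF)) := by
  classical
  have hkF0 : (0:ℝ) < kF := lt_of_lt_of_le zero_lt_one hkF
  set g : ℕ → ENNReal := fun m => ENNReal.ofReal (2*CV^2 * min ((m:ℕ):ℝ) kF / ((m:ℕ):ℝ)^4)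
    with hg
  set MM : {k : Z3 // k ≠ 0} → ℕ := fun k => supN k.1 with hMM
  -- Step 1: pointwise bound
  have hpt : ∀ k : {k : Z3 // k ≠ 0},
      ENNReal.ofReal ((V ↑k) ^ 2 * min (nrm ↑k) kF) ≤ g (MM k) := by
    intro k
    apply ENNReal.ofReal_le_ofReal
    set M := supN k.1 with hM
    have hM1 : 1 ≤ M := supN_pos k.2
    have hM1' : (1:ℝ) ≤ (M:ℝ) := by exact_mod_cast hM1
    have hMpos : (0:ℝ) < (M:ℝ) := lt_of_lt_of_le zero_lt_one hM1'
    have hnsqpos : 0 < nsq k.1 := lt_of_lt_of_le (by positivity) (le_nsq k.1)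
    have hVk : V k.1 ≤ CV / ((M:ℝ))^2 := by
      calc V k.1 ≤ CV / nsq k.1 := hVb k.1 k.2
        _ ≤ CV / ((M:ℝ))^2 := by
            apply div_le_div_of_nonneg_left (le_of_lt hCV) (by positivity) (le_nsq k.1)
    have hVsq : (V k.1)^2 ≤ (CV / ((M:ℝ))^2)^2 :=
      pow_le_pow_left₀ (hV0 k.1 k.2) hVk 2
    have hmin : min (nrm k.1) kF ≤ 2 * min ((M:ℝ)) kF := by
      rcases le_total ((M:ℝ)) kF with h | h
      · rw [min_eq_left h]
        calc min (nrm k.1) kF ≤ nrm k.1 := min_le_left _ _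
          _ ≤ 2*(M:ℝ) := nrm_le k.1
      · rw [min_eq_right h]
        calc min (nrm k.1) kF ≤ kF := min_le_right _ _
          _ ≤ 2*kF := by linarith
    have hminnn : 0 ≤ min (nrm k.1) kF := le_min (Real.sqrt_nonneg _) (le_of_lt hkF0)
    have h2 : (V k.1)^2 * min (nrm k.1) kF ≤ (CV / ((M:ℝ))^2)^2 * (2 * min ((M:ℝ)) kF) :=
      mul_le_mul hVsq hmin hminnn (by positivity)
    calc (V k.1)^2 * min (nrm k.1) kF ≤ (CV / ((M:ℝ))^2)^2 * (2 * min ((M:ℝ)) kF) := h2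
      _ = 2*CV^2 * min ((M:ℝ)) kF / ((M:ℝ))^4 := by
          field_simp
  have step1 : ∑' k : {k : Z3 // k ≠ 0}, ENNReal.ofReal ((V ↑k) ^ 2 * min (nrm ↑k) kF)
      ≤ ∑' k : {k : Z3 // k ≠ 0}, g (MM k) := ENNReal.tsum_le_tsum hpt
  -- Step 3: fibering
  have hsig : ∑' k : {k : Z3 // k ≠ 0}, g (MM k)
      = ∑' m : ℕ, ∑' _x : {k : {k : Z3 // k ≠ 0} // MM k = m}, g m := by
    rw [← (Equiv.sigmaFiberEquiv MM).tsum_eq (fun k => g (MM k)), ENNReal.tsum_sigma']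
    apply tsum_congr
    intro m
    apply tsum_congr
    intro x
    exact congrArg g x.2
  -- Step 4: fiber counting
  have step4 : ∀ m : ℕ, ∑' _x : {k : {k : Z3 // k ≠ 0} // MM k = m}, g m
      ≤ (54 * m^2 : ℕ) * g m := by
    intro m
    set ι : {k : {k : Z3 // k ≠ 0} // MM k = m} → {y : Z3 // y ∈ shell m} :=
      fun x => ⟨x.1.1, mem_shell x.2⟩ with hι
    have hinj : Function.Injective ι := by
      intro a b hab
      simp only [hι, Subtype.mk.injEq] at hab
      exact Subtype.ext (Subtype.ext hab)
    calc ∑' _x : {k : {k : Z3 // k ≠ 0} // MM k = m}, g m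
        = ∑' x : {k : {k : Z3 // k ≠ 0} // MM k = m}, (fun _ : {y : Z3 // y ∈ shell m} => g m) (ι x) := rfl
      _ ≤ ∑' _y : {y : Z3 // y ∈ shell m}, g m :=
          ENNReal.tsum_comp_le_tsum_of_injective hinj _
      _ = (Fintype.card {y : Z3 // y ∈ shell m}) • g m := by
          rw [tsum_fintype, Finset.sum_const, Finset.card_univ]
      _ = ((shell m).card : ENNReal) * g m := by
          rw [Fintype.card_coe, nsmul_eq_mul]
      _ ≤ (54 * m^2 : ℕ) * g m := by
          rcases Nat.eq_zero_or_pos m with hm | hm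
          · subst hm
            have : g 0 = 0 := by rw [hg]; simp
            rw [this, mul_zero, mul_zero]
          · apply mul_le_mul_left
            exact_mod_cast card_shell_le m hm
  -- Step 5
  have hterm : ∀ m : ℕ, (54 * m^2 : ℕ) * g m
      = ENNReal.ofReal (108 * CV^2 * (min ((m:ℕ):ℝ) kF / ((m:ℕ):ℝ)^2)) := by
    intro m
    rcases Nat.eq_zero_or_pos m with hm | hm
    · subst hm
      rw [hg]
      simp
    · have hmpos : (0:ℝ) < (m:ℝ) := by exact_mod_cast hm
      rw [hg]
      have hnn : (0:ℝ) ≤ 2*CV^2 * min ((m:ℕ):ℝ) kF / ((m:ℕ):ℝ)^4 := by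
        apply div_nonneg _ (by positivity)
        have : 0 ≤ min ((m:ℕ):ℝ) kF := le_min (by positivity) (le_of_lt hkF0)
        positivity
      have hcast : ((54 * m^2 : ℕ) : ENNReal) = ENNReal.ofReal ((54 * m^2 : ℕ) : ℝ) := by
        rw [ENNReal.ofReal_natCast]
      rw [hcast, ← ENNReal.ofReal_mul (by positivity)]
      congr 1
      push_cast
      field_simp
      ring
  have step5 : ∑' m : ℕ, (54 * m^2 : ℕ) * g m
      ≤ ENNReal.ofReal (324 * CV^2 * (1 + Real.log kF)) := by
    have heq : ∀ m : ℕ, (54 * m^2 : ℕ) * g m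
        = ENNReal.ofReal (108 * CV^2 * (min ((m:ℕ):ℝ) kF / ((m:ℕ):ℝ)^2)) := hterm
    rw [tsum_congr heq]
    rw [ENNReal.tsum_eq_iSup_sum]
    apply iSup_le
    intro F
    have hnn : ∀ m ∈ F, (0:ℝ) ≤ 108 * CV^2 * (min ((m:ℕ):ℝ) kF / ((m:ℕ):ℝ)^2) := by
      intro m _
      have h1 : (0:ℝ) ≤ min ((m:ℕ):ℝ) kF := le_min (by positivity) (le_of_lt hkF0)
      have : (0:ℝ) ≤ min ((m:ℕ):ℝ) kF / ((m:ℕ):ℝ)^2 := div_nonneg h1 (by positivity)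
      positivity
    rw [← ENNReal.ofReal_sum_of_nonneg hnn]
    apply ENNReal.ofReal_le_ofReal
    have hsum := sum_min_le kF hkF F
    calc ∑ m ∈ F, 108 * CV^2 * (min ((m:ℕ):ℝ) kF / ((m:ℕ):ℝ)^2)
        = 108 * CV^2 * ∑ m ∈ F, min ((m:ℕ):ℝ) kF / ((m:ℕ):ℝ)^2 := by
          rw [Finset.mul_sum]
      _ ≤ 108 * CV^2 * (3 * (1 + Real.log kF)) := by
          apply mul_le_mul_of_nonneg_left hsum (by positivity)
      _ = 324 * CV^2 * (1 + Real.log kF) := by ring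
  calc ∑' k : {k : Z3 // k ≠ 0}, ENNReal.ofReal ((V ↑k) ^ 2 * min (nrm ↑k) kF)
      ≤ ∑' k : {k : Z3 // k ≠ 0}, g (MM k) := step1
    _ = ∑' m : ℕ, ∑' _x : {k : {k : Z3 // k ≠ 0} // MM k = m}, g m := hsig
    _ ≤ ∑' m : ℕ, (54 * m^2 : ℕ) * g m := ENNReal.tsum_le_tsum step4
    _ ≤ ENNReal.ofReal (324 * CV^2 * (1 + Real.log kF)) := step5

end PotAux

/-- **Logarithmic bound for `∑ V̂_k² min{|k|, k_F}`.** If `V̂ ≥ 0` satisfies `V̂_k ≤ C_V |k|⁻²`,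
then there is `C > 0` depending only on `C_V` with
`∑_{k ≠ 0} V̂_k² min{|k|, k_F} ≤ C (1 + log k_F)` for all `k_F ≥ 1`; in particular, for every
`ε > 0` there is `C_ε > 0` depending only on `C_V` and `ε` with
`∑_{k ≠ 0} V̂_k² min{|k|, k_F} ≤ C_ε k_F^ε` for all `k_F ≥ 1`. The sums over `k ∈ ℤ³ \ {0}` are
interpreted as sums of nonnegative terms in `[0, ∞]`. -/
theorem potential_sum_log_bound (CV : ℝ) (hCV : 0 < CV) :
    (∃ C > (0 : ℝ), ∀ V : Z3 → ℝ,
      (∀ k : Z3, k ≠ 0 → 0 ≤ V k) → (∀ k : Z3, k ≠ 0 → V k ≤ CV / nsq k) →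
      ∀ kF : ℝ, 1 ≤ kF →
        ∑' k : {k : Z3 // k ≠ 0}, ENNReal.ofReal ((V ↑k) ^ 2 * min (nrm ↑k) kF) ≤
          ENNReal.ofReal (C * (1 + Real.log kF))) ∧
    (∀ ε : ℝ, 0 < ε → ∃ C > (0 : ℝ), ∀ V : Z3 → ℝ,
      (∀ k : Z3, k ≠ 0 → 0 ≤ V k) → (∀ k : Z3, k ≠ 0 → V k ≤ CV / nsq k) →
      ∀ kF : ℝ, 1 ≤ kF →
        ∑' k : {k : Z3 // k ≠ 0}, ENNReal.ofReal ((V ↑k) ^ 2 * min (nrm ↑k) kF) ≤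
          ENNReal.ofReal (C * kF ^ ε)) := by
  constructor
  · refine ⟨324 * CV^2, by positivity, ?_⟩
    intro V hV0 hVb kF hkF
    exact PotAux.main_bound CV hCV V hV0 hVb kF hkF
  · intro ε hε
    refine ⟨324 * CV^2 * (1 + 1/ε), by positivity, ?_⟩
    intro V hV0 hVb kF hkF
    have hkF0 : (0:ℝ) < kF := lt_of_lt_of_le zero_lt_one hkF
    have hrpow1 : (1:ℝ) ≤ kF ^ ε := Real.one_le_rpow hkF (le_of_lt hε)
    have hlog : Real.log kF ≤ kF ^ ε / ε := by
      have h1 : Real.log (kF ^ ε) = ε * Real.log kF := Real.log_rpow hkF0 ε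
      have h2 : Real.log (kF ^ ε) ≤ kF ^ ε - 1 :=
        Real.log_le_sub_one_of_pos (Real.rpow_pos_of_pos hkF0 ε)
      rw [h1] at h2
      rw [le_div_iff₀ hε]
      nlinarith
    have hmain := PotAux.main_bound CV hCV V hV0 hVb kF hkF
    apply le_trans hmain
    apply ENNReal.ofReal_le_ofReal
    have h3 : 1 + Real.log kF ≤ (1 + 1/ε) * kF ^ ε := by
      have : (1 + 1/ε) * kF ^ ε = kF ^ ε + kF ^ ε / ε := by
        field_simp
      rw [this]
      linarith
    calc 324 * CV^2 * (1 + Real.log kF) ≤ 324 * CV^2 * ((1 + 1/ε) * kF ^ ε) := by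
          apply mul_le_mul_of_nonneg_left h3 (by positivity)
      _ = 324 * CV^2 * (1 + 1/ε) * kF ^ ε := by ring
end
end
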